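/- arXiv:1210.5391 — 3 statements merged into one kernel-verified Lean document; each statement's English description precedes it below -/
import Mathlib

section
/- Let X be a right-continuous adapted ℝ^D-valued process on a filtered probability space satisfying the usual conditions (modeling D discounted risky assets alongside a constant bond B_t = 1). If X does not satisfy the no obvious arbitrage condition (NOA), then X admits a simple arbitrage, i.e., there exists a simple strategy Φ with V_∞(Φ;0) ≥ 0 P-a.s. and P(V_∞(Φ;0) > 0) > 0. -/
open MeasureTheory ProbabilityTheory Filter Set
open scoped ENNReal NNReal RealInnerProductSpace

namespace SimpleArbitrage

variable {Ω : Type*} {mΩ : MeasurableSpace Ω}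
variable {E : Type*} [NormedAddCommGroup E] [InnerProductSpace ℝ E] [MeasurableSpace E]

/-- The filtered probability space satisfies the usual conditions: the filtration is
right-continuous and contains all `P`-null sets. -/
def UsualConditions (F : Filtration ℝ mΩ) (P : Measure Ω) : Prop :=
  (∀ t : ℝ, (F t : MeasurableSpace Ω) = ⨅ s : Ioi t, F (s : ℝ)) ∧
  ∀ t : ℝ, ∀ N : Set Ω, P N = 0 → MeasurableSet[F t] N

/-- A (possibly infinite, extended-real-valued) stopping time. -/
def IsStoppingTimeE (F : Filtration ℝ mΩ) (σ : Ω → EReal) : Prop :=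
  ∀ t : ℝ, MeasurableSet[F t] {ω | σ ω ≤ (t : EReal)}

/-- `H` is `𝓕_σ`-measurable, where `σ` is a (possibly infinite) stopping time. -/
def MeasurableAtTime (F : Filtration ℝ mΩ) (σ : Ω → EReal) {α : Type*} [MeasurableSpace α]
    (H : Ω → α) : Prop :=
  ∀ B : Set α, MeasurableSet B → ∀ t : ℝ, MeasurableSet[F t] (H ⁻¹' B ∩ {ω | σ ω ≤ (t : EReal)})

/-- An `𝓕_σ`-measurable direction: an `𝓕_σ`-measurable random vector of norm one. -/
def IsDirection (F : Filtration ℝ mΩ) (P : Measure Ω) (σ : Ω → EReal) (H : Ω → E) : Prop :=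
  MeasurableAtTime F σ H ∧ ∀ᵐ ω ∂P, ‖H ω‖ = 1

/-- The no obvious arbitrage (NOA) condition: for every a.s. possibly finite stopping time `σ`
with `P(σ < ∞) > 0`, every `𝓕_σ`-measurable direction `H` and every `ε > 0`,
`P({σ < ∞} ∩ {sup_{t ∈ [σ,∞)} ⟪H, X t - X σ⟫ < ε}) > 0`. -/
def NOA (F : Filtration ℝ mΩ) (P : Measure Ω) (X : ℝ → Ω → E) : Prop :=
  ∀ σ : Ω → EReal, IsStoppingTimeE F σ → (∀ ω, 0 ≤ σ ω) → 0 < P {ω | σ ω < ⊤} →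
    ∀ H : Ω → E, IsDirection F P σ H → ∀ ε : ℝ, 0 < ε →
      0 < P ({ω | σ ω < ⊤} ∩
        {ω | ∃ δ : ℝ, δ < ε ∧ ∀ t : ℝ, σ ω ≤ (t : EReal) →
          ⟪H ω, X t ω - X (σ ω).toReal ω⟫ ≤ δ})

/-- A simple strategy: trading at finitely many a.s. finite stopping times
`0 = τ_0 ≤ τ_1 ≤ ⋯ ≤ τ_n`, holding the `𝓕_{τ_j}`-measurable portfolio `φ_j` on `(τ_j, τ_{j+1}]`. -/
structure SimpleStrategy (F : Filtration ℝ mΩ) (E : Type*) [MeasurableSpace E] where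
  n : ℕ
  τ : ℕ → Ω → ℝ
  φ : ℕ → Ω → E
  τ_zero : ∀ ω, τ 0 ω = 0
  τ_mono : ∀ j, j < n → ∀ ω, τ j ω ≤ τ (j + 1) ω
  τ_stopping : ∀ j, j ≤ n → IsStoppingTime F (fun ω => ((τ j ω : ℝ) : WithTop ℝ))
  φ_meas : ∀ j, j < n → MeasurableAtTime F (fun ω => ((τ j ω : ℝ) : EReal)) (φ j)

/-- The wealth process `V_t(Φ;0)` of a simple strategy from initial capital `0`. -/
noncomputable def wealth {F : Filtration ℝ mΩ} (X : ℝ → Ω → E) (Φ : SimpleStrategy F E)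
    (t : ℝ) (ω : Ω) : ℝ :=
  ∑ j ∈ Finset.range Φ.n,
    ⟪Φ.φ j ω, X (min t (Φ.τ (j + 1) ω)) ω - X (min t (Φ.τ j ω)) ω⟫

/-- The terminal wealth `V_∞(Φ;0) = lim_{t → ∞} V_t(Φ;0)` of a simple strategy. -/
noncomputable def wealthEnd {F : Filtration ℝ mΩ} (X : ℝ → Ω → E) (Φ : SimpleStrategy F E)
    (ω : Ω) : ℝ :=
  ∑ j ∈ Finset.range Φ.n, ⟪Φ.φ j ω, X (Φ.τ (j + 1) ω) ω - X (Φ.τ j ω) ω⟫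

/-- `Φ` is an arbitrage: `V_∞(Φ;0) ≥ 0` a.s. and `P(V_∞(Φ;0) > 0) > 0`. -/
def IsArbitrage {F : Filtration ℝ mΩ} (P : Measure Ω) (X : ℝ → Ω → E)
    (Φ : SimpleStrategy F E) : Prop :=
  (∀ᵐ ω ∂P, 0 ≤ wealthEnd X Φ ω) ∧ 0 < P {ω | 0 < wealthEnd X Φ ω}

/-- `Φ` is `c`-admissible: `inf_{t ∈ [0,∞)} V_t(Φ;0) ≥ -c` a.s. -/
def IsAdmissible {F : Filtration ℝ mΩ} (P : Measure Ω) (X : ℝ → Ω → E)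
    (Φ : SimpleStrategy F E) (c : ℝ) : Prop :=
  ∀ᵐ ω ∂P, ∀ t : ℝ, 0 ≤ t → -c ≤ wealth X Φ t ω

/-- The model `X` is free of arbitrage with simple strategies. -/
def NoSimpleArbitrage (F : Filtration ℝ mΩ) (P : Measure Ω) (X : ℝ → Ω → E) : Prop :=
  ∀ Φ : SimpleStrategy F E, ¬ IsArbitrage P X Φ

/-- Wealth process of the two-stopping-time strategy `H 1_{(σ,τ]}`. -/
noncomputable def pairWealth (X : ℝ → Ω → E) (H : Ω → E) (σ τ : Ω → ℝ) (t : ℝ) (ω : Ω) : ℝ :=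
  ⟪H ω, X (min t (τ ω)) ω - X (min t (σ ω)) ω⟫

/-- There is a `0`-admissible arbitrage of the form `H 1_{(σ,τ]}` with bounded stopping
times `σ ≤ τ` and an `𝓕_σ`-measurable direction `H`. -/
def ExistsAdmissiblePairArbitrage (F : Filtration ℝ mΩ) (P : Measure Ω)
    (X : ℝ → Ω → E) : Prop :=
  ∃ (σ τ : Ω → ℝ) (H : Ω → E),
    IsStoppingTime F (fun ω => ((σ ω : ℝ) : WithTop ℝ)) ∧ IsStoppingTime F (fun ω => ((τ ω : ℝ) : WithTop ℝ)) ∧ (∀ ω, 0 ≤ σ ω) ∧ (∀ ω, σ ω ≤ τ ω) ∧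
    (∃ K : ℝ, ∀ ω, τ ω ≤ K) ∧
    IsDirection F P (fun ω => ((σ ω : ℝ) : EReal)) H ∧
    (∀ᵐ ω ∂P, ∀ t : ℝ, 0 ≤ t → 0 ≤ pairWealth X H σ τ t ω) ∧
    (∀ᵐ ω ∂P, 0 ≤ ⟪H ω, X (τ ω) ω - X (σ ω) ω⟫) ∧
    0 < P {ω | 0 < ⟪H ω, X (τ ω) ω - X (σ ω) ω⟫}

/-- `σ_H = inf { t ≥ σ : ⟪H, X t - X σ⟫ > 0 }`, as an extended real number (`⊤` if no such
time exists). -/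
noncomputable def hittingAfter (X : ℝ → Ω → E) (σ : Ω → EReal) (H : Ω → E) (ω : Ω) : EReal :=
  sInf {u : EReal | ∃ t : ℝ, u = (t : EReal) ∧ σ ω ≤ (t : EReal) ∧
    0 < ⟪H ω, X t ω - X (σ ω).toReal ω⟫}

/-- Two-way crossing at the stopping time `σ` along the direction `H`: `σ_H = σ_{-H}` a.s. -/
def TWCAt (P : Measure Ω) (X : ℝ → Ω → E) (σ : Ω → EReal) (H : Ω → E) : Prop :=
  ∀ᵐ ω ∂P, hittingAfter X σ H ω = hittingAfter X σ (fun ω' => -H ω') ω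

/-- Two-way crossing (TWC) at bounded stopping times. -/
def TWCBounded (F : Filtration ℝ mΩ) (P : Measure Ω) (X : ℝ → Ω → E) : Prop :=
  ∀ σ : Ω → ℝ, IsStoppingTime F (fun ω => ((σ ω : ℝ) : WithTop ℝ)) → (∀ ω, 0 ≤ σ ω) → (∃ K : ℝ, ∀ ω, σ ω ≤ K) →
    ∀ H : Ω → E, IsDirection F P (fun ω => ((σ ω : ℝ) : EReal)) H →
      TWCAt P X (fun ω => ((σ ω : ℝ) : EReal)) H

/-- Two-way crossing (TWC) at a.s. finite stopping times. -/
def TWCFinite (F : Filtration ℝ mΩ) (P : Measure Ω) (X : ℝ → Ω → E) : Prop :=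
  ∀ σ : Ω → EReal, IsStoppingTimeE F σ → (∀ ω, 0 ≤ σ ω) → (∀ᵐ ω ∂P, σ ω < ⊤) →
    ∀ H : Ω → E, IsDirection F P σ H → TWCAt P X σ H

/-- A process is adapted to the filtration (on the relevant time interval `[0,∞)`). -/
def AdaptedProc {β : Type*} [TopologicalSpace β] (F : Filtration ℝ mΩ) (X : ℝ → Ω → β) : Prop :=
  ∀ t : ℝ, 0 ≤ t → StronglyMeasurable[F t] (X t)

/-- Right-continuity of paths. -/
def RightContinuousPaths {β : Type*} [TopologicalSpace β] (X : ℝ → Ω → β) : Prop :=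
  ∀ ω, ∀ t : ℝ, ContinuousWithinAt (fun s => X s ω) (Ici t) t

/-- Continuity of paths. -/
def ContinuousPaths {β : Type*} [TopologicalSpace β] (X : ℝ → Ω → β) : Prop :=
  ∀ ω, Continuous fun t => X t ω

/-- `M` is a martingale on the time interval `[0,∞)`. -/
def MartingaleOn [CompleteSpace E] (F : Filtration ℝ mΩ) (P : Measure Ω)
    (M : ℝ → Ω → E) : Prop :=
  (∀ t : ℝ, 0 ≤ t → StronglyMeasurable[F t] (M t)) ∧
  (∀ t : ℝ, 0 ≤ t → Integrable (M t) P) ∧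
  ∀ s t : ℝ, 0 ≤ s → s ≤ t → P[M t|F s] =ᵐ[P] M s

/-- `M` is a local martingale on `[0,∞)`: there is a localizing sequence of finite stopping
times increasing a.s. to `∞` such that each stopped process is a martingale. -/
def IsLocalMartingale [CompleteSpace E] (F : Filtration ℝ mΩ) (P : Measure Ω)
    (M : ℝ → Ω → E) : Prop :=
  ∃ τ : ℕ → Ω → ℝ, (∀ n, IsStoppingTime F (fun ω => ((τ n ω : ℝ) : WithTop ℝ))) ∧ (∀ n ω, 0 ≤ τ n ω) ∧
    (∀ n ω, τ n ω ≤ τ (n + 1) ω) ∧ (∀ᵐ ω ∂P, Tendsto (fun n => τ n ω) atTop atTop) ∧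
    ∀ n, MartingaleOn F P fun t ω => M (min t (τ n ω)) ω

/-- `Z` is `a`-Hölder continuous on compacts: for each `K ∈ ℕ` there is a positive random
variable `C_K` with `‖Z t - Z s‖ ≤ C_K (t-s)^a` for `0 ≤ s ≤ t ≤ K`. -/
def HolderOnCompacts {β : Type*} [NormedAddCommGroup β] (Z : ℝ → Ω → β) (a : ℝ) : Prop :=
  ∀ K : ℕ, ∃ C : Ω → ℝ, (∀ ω, 0 < C ω) ∧
    ∀ ω, ∀ s t : ℝ, 0 ≤ s → s ≤ t → t ≤ (K : ℝ) → ‖Z t ω - Z s ω‖ ≤ C ω * (t - s) ^ a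

/-- The σ-algebra generated by a process (on the time interval `[0,∞)`). -/
def processSigma {α : Type*} [MeasurableSpace α] (X : ℝ → Ω → α) : MeasurableSpace Ω :=
  ⨆ t : Ici (0 : ℝ), MeasurableSpace.comap (X (t : ℝ)) inferInstance

/-- The processes `X` and `Y` are independent. -/
def IndepProcesses {α β : Type*} [MeasurableSpace α] [MeasurableSpace β]
    (P : Measure Ω) (X : ℝ → Ω → α) (Y : ℝ → Ω → β) : Prop :=
  Indep (processSigma X) (processSigma Y) P

/-- `W` is a one-dimensional `(𝓕_t)`-Brownian motion. -/
def IsBrownianMotion (F : Filtration ℝ mΩ) (P : Measure Ω) (W : ℝ → Ω → ℝ) : Prop :=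
  AdaptedProc F W ∧ (∀ ω, W 0 ω = 0) ∧ (∀ ω, Continuous fun t => W t ω) ∧
  ∀ s t : ℝ, 0 ≤ s → s ≤ t →
    Indep (F s) (MeasurableSpace.comap (fun ω => W t ω - W s ω) inferInstance) P ∧
    Measure.map (fun ω => W t ω - W s ω) P = gaussianReal 0 (Real.toNNReal (t - s))

/-- `(W, B)` is a two-dimensional `(𝓕_t)`-Brownian motion. -/
def IsTwoDimBM (F : Filtration ℝ mΩ) (P : Measure Ω) (W B : ℝ → Ω → ℝ) : Prop :=
  IsBrownianMotion F P W ∧ IsBrownianMotion F P B ∧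
  ∀ s t : ℝ, 0 ≤ s → s ≤ t →
    Indep (F s)
      (MeasurableSpace.comap (fun ω => (W t ω - W s ω, B t ω - B s ω)) inferInstance) P ∧
    IndepFun (fun ω => W t ω - W s ω) (fun ω => B t ω - B s ω) P

/-- `W` is an `N`-dimensional `(𝓕_t)`-Brownian motion. -/
def IsMultiBM {N : ℕ} (F : Filtration ℝ mΩ) (P : Measure Ω)
    (W : ℝ → Ω → EuclideanSpace ℝ (Fin N)) : Prop :=
  AdaptedProc F W ∧ (∀ ω, W 0 ω = 0) ∧ (∀ ω, Continuous fun t => W t ω) ∧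
  ∀ s t : ℝ, 0 ≤ s → s ≤ t →
    Indep (F s) (MeasurableSpace.comap (fun ω => W t ω - W s ω) inferInstance) P ∧
    iIndepFun (fun (i : Fin N) ω => W t ω i - W s ω i) P ∧
    ∀ i : Fin N, Measure.map (fun ω => W t ω i - W s ω i) P
      = gaussianReal 0 (Real.toNNReal (t - s))

/-- The covariance function of fractional Brownian motion with Hurst parameter `Hu`. -/
noncomputable def fbmCov (Hu : ℝ) (s t : ℝ) : ℝ :=
  (|s| ^ (2 * Hu) + |t| ^ (2 * Hu) - |t - s| ^ (2 * Hu)) / 2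

/-- `Z` is a fractional Brownian motion with Hurst parameter `Hu`: a centered Gaussian
process with the fBm covariance, with paths Hölder continuous of any exponent `< Hu`. -/
def IsFractionalBM (P : Measure Ω) (Hu : ℝ) (Z : ℝ → Ω → ℝ) : Prop :=
  (∀ t : ℝ, Measurable (Z t)) ∧ (∀ ω, Z 0 ω = 0) ∧ (∀ ω, Continuous fun t => Z t ω) ∧
  (∀ a : ℝ, 0 < a → a < Hu → HolderOnCompacts Z a) ∧
  ∀ (k : ℕ) (c : Fin k → ℝ) (t : Fin k → ℝ), (∀ i, 0 ≤ t i) →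
    Measure.map (fun ω => ∑ i, c i * Z (t i) ω) P =
      gaussianReal 0 (Real.toNNReal (∑ i, ∑ j, c i * c j * fbmCov Hu (t i) (t j)))

/-- `I` is (a version of) the stochastic integral `∫_0^· h s dB_s`: a continuous adapted
local martingale vanishing at `0`, with quadratic variation `∫_0^· h_s^2 ds` and covariation
`⟨I, B⟩ = ∫_0^· h_s ds` (both encoded via the local martingale characterization). -/
def IsStochIntegral (F : Filtration ℝ mΩ) (P : Measure Ω) (h : ℝ → Ω → ℝ)
    (B I : ℝ → Ω → ℝ) : Prop :=
  (∀ ω, I 0 ω = 0) ∧ ContinuousPaths I ∧ AdaptedProc F I ∧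
  IsLocalMartingale F P I ∧
  IsLocalMartingale F P (fun t ω => I t ω ^ 2 - ∫ s in (0:ℝ)..t, (h s ω) ^ 2) ∧
  IsLocalMartingale F P (fun t ω => I t ω * B t ω - ∫ s in (0:ℝ)..t, h s ω)

/-- The filtration stopped at time `T`, i.e. `t ↦ 𝓕_{t ∧ T}`. -/
def stoppedFiltration (F : Filtration ℝ mΩ) (T : ℝ) : Filtration ℝ mΩ where
  seq t := F (min t T)
  mono' := fun _ _ hst => F.mono (min_le_min hst le_rfl)
  le' t := F.le (min t T)

/-- The model `(X_t, 𝓕_t)` is free of simple arbitrage on finite time horizons: for every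
`T > 0` the stopped model `(X_{t ∧ T}, 𝓕_{t ∧ T})` has no simple arbitrage. -/
def NoSimpleArbitrageFiniteHorizons (F : Filtration ℝ mΩ) (P : Measure Ω)
    (X : ℝ → Ω → E) : Prop :=
  ∀ T : ℝ, 0 < T → NoSimpleArbitrage (stoppedFiltration F T) P (fun t ω => X (min t T) ω)

/-- The no obvious arbitrage condition on the time interval `[0,T]`. -/
def NOAUpTo (F : Filtration ℝ mΩ) (P : Measure Ω) (X : ℝ → Ω → E) (T : ℝ) : Prop :=
  ∀ σ : Ω → ℝ, IsStoppingTime F (fun ω => ((σ ω : ℝ) : WithTop ℝ)) → (∀ ω, 0 ≤ σ ω ∧ σ ω ≤ T) → 0 < P {ω | σ ω < T} →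
    ∀ H : Ω → E, IsDirection F P (fun ω => ((σ ω : ℝ) : EReal)) H →
      ∀ ε : ℝ, 0 < ε →
        0 < P ({ω | σ ω < T} ∩
          {ω | ∃ δ : ℝ, δ < ε ∧ ∀ t : ℝ, σ ω ≤ t → t ≤ T →
            ⟪H ω, X t ω - X (σ ω) ω⟫ ≤ δ})

/-- `A` is the quadratic variation `⟨M⟩` of the continuous local martingale `M`:
`A` is continuous, increasing, adapted, starts at `0`, and `M² - A` is a local martingale. -/
def IsQuadVariation (F : Filtration ℝ mΩ) (P : Measure Ω) (M A : ℝ → Ω → ℝ) : Prop :=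
  (∀ ω, A 0 ω = 0) ∧ ContinuousPaths A ∧
  (∀ ω, ∀ s t : ℝ, 0 ≤ s → s ≤ t → A s ω ≤ A t ω) ∧
  AdaptedProc F A ∧
  IsLocalMartingale F P (fun t ω => M t ω * M t ω - A t ω)

/-- `A` is the matrix-valued quadratic variation `⟨M⟩` of the `D`-dimensional continuous
local martingale `M`: symmetric, continuous, adapted, `A_0 = 0` and `M^i M^j - A^{ij}` is a
local martingale for all `i, j`. -/
def IsMatrixQuadVariation {D : ℕ} (F : Filtration ℝ mΩ) (P : Measure Ω)
    (M : ℝ → Ω → EuclideanSpace ℝ (Fin D)) (A : ℝ → Ω → Matrix (Fin D) (Fin D) ℝ) : Prop :=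
  (∀ ω, A 0 ω = 0) ∧ (∀ ω i j, Continuous fun t => A t ω i j) ∧
  (∀ ω t, (A t ω).IsSymm) ∧
  (∀ i j : Fin D, AdaptedProc F (fun t ω => A t ω i j)) ∧
  ∀ i j : Fin D, IsLocalMartingale F P (fun t ω => M t ω i * M t ω j - A t ω i j)

/-- `G` is the augmentation (by `P`-null sets) of the natural filtration of `X`. -/
def IsAugmentedNaturalFiltration {β : Type*} [MeasurableSpace β] (P : Measure Ω)
    (X : ℝ → Ω → β) (G : Filtration ℝ mΩ) : Prop :=
  ∀ t : ℝ, (G t : MeasurableSpace Ω) =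
    (⨆ s : {s : ℝ // 0 ≤ s ∧ s ≤ t}, MeasurableSpace.comap (X s.1) inferInstance) ⊔
      MeasurableSpace.generateFrom {N : Set Ω | P N = 0}

/-!
If (NOA) fails at a stopping time `σ` along an `𝓕_σ`-measurable direction `H` with threshold `ε`,
then almost surely on `{σ < ∞}` the gain `⟪H, X t - X σ⟫` exceeds `ε / 2` at some time after `σ`.
Choose `m` with `P(σ ≤ m) > 0`, buy `H` at `σ ∧ m` on `{σ ≤ m}`, and sell at the infimum of the
rational times at which the gain exceeds `ε / 2`. Right-continuity of the paths keeps the gain at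
least `ε / 2` at the selling time, so the terminal wealth is nonnegative everywhere and positive on
`{σ ≤ m}` up to a null set. The selling time is a stopping time by the usual conditions:
right-continuity of the filtration handles the infimum, completeness the null set on which no gain
occurs.
-/

open scoped Topology

section Filtration

variable {F : Filtration ℝ mΩ}

lemma UsualConditions.isRightContinuous {P : Measure Ω} (h : UsualConditions F P) :
    F.IsRightContinuous := by
  refine ⟨fun t => ?_⟩
  rw [Filtration.rightCont_eq, h.1 t]
  exact le_iInf fun s => iInf₂_le s.1 s.2

lemma measurableSet_of_forall_gt [F.IsRightContinuous] {c : ℝ} {s : Set Ω}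
    (h : ∀ d, c < d → MeasurableSet[F d] s) : MeasurableSet[F c] s := by
  refine Filtration.IsRightContinuous.measurableSet ?_
  rw [Filtration.rightCont_eq]
  simpa [MeasurableSpace.measurableSet_iInf] using h

lemma measurableSet_le_of_isStoppingTime {ρ : Ω → ℝ}
    (hρ : IsStoppingTime F fun ω => ((ρ ω : ℝ) : WithTop ℝ)) (t : ℝ) :
    MeasurableSet[F t] {ω | ρ ω ≤ t} := by
  simpa using hρ t

end Filtration

section Strategy

variable {F : Filtration ℝ mΩ}

/-- The simple strategy `φ 1_{(ρ,τ]}`. -/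
def pairStrategy {β : Type*} [MeasurableSpace β] [Zero β] {ρ τ : Ω → ℝ} {φ : Ω → β}
    (hρ0 : ∀ ω, 0 ≤ ρ ω) (hρτ : ∀ ω, ρ ω ≤ τ ω)
    (hρ : IsStoppingTime F fun ω => ((ρ ω : ℝ) : WithTop ℝ))
    (hτ : IsStoppingTime F fun ω => ((τ ω : ℝ) : WithTop ℝ))
    (hφ : MeasurableAtTime F (fun ω => ((ρ ω : ℝ) : EReal)) φ) : SimpleStrategy F β where
  n := 2
  τ j := match j with
    | 0 => 0
    | 1 => ρ
    | _ => τ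
  φ j := if j = 1 then φ else 0
  τ_zero _ := rfl
  τ_mono j hj ω := by
    interval_cases j
    exacts [hρ0 ω, hρτ ω]
  τ_stopping j hj := by
    interval_cases j
    exacts [isStoppingTime_const F 0, hρ, hτ]
  φ_meas j hj := by
    interval_cases j
    · exact fun B hB t => (measurable_const hB).inter (MeasurableSet.const ((0 : EReal) ≤ t))
    · exact hφ

lemma wealthEnd_pairStrategy (X : ℝ → Ω → E) {ρ τ : Ω → ℝ} {φ : Ω → E} (hρ0 : ∀ ω, 0 ≤ ρ ω)
    (hρτ : ∀ ω, ρ ω ≤ τ ω) (hρ : IsStoppingTime F fun ω => ((ρ ω : ℝ) : WithTop ℝ))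
    (hτ : IsStoppingTime F fun ω => ((τ ω : ℝ) : WithTop ℝ))
    (hφ : MeasurableAtTime F (fun ω => ((ρ ω : ℝ) : EReal)) φ) (ω : Ω) :
    wealthEnd X (pairStrategy hρ0 hρτ hρ hτ hφ) ω = ⟪φ ω, X (τ ω) ω - X (ρ ω) ω⟫ := by
  simp [wealthEnd, pairStrategy, Finset.sum_range_succ]

end Strategy

section Truncation

variable {F : Filtration ℝ mΩ} {σ : Ω → EReal} {m : ℝ}

noncomputable def truncTime (σ : Ω → EReal) (m : ℝ) (ω : Ω) : ℝ := (min (σ ω) m).toReal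

lemma coe_truncTime {ω : Ω} (hσ : σ ω ≠ ⊥) : (truncTime σ m ω : EReal) = min (σ ω) m :=
  EReal.coe_toReal ((min_le_right _ _).trans_lt (EReal.coe_lt_top m)).ne (by simp [hσ])

lemma truncTime_nonneg (hσ0 : ∀ ω, 0 ≤ σ ω) (hm : 0 ≤ m) (ω : Ω) : 0 ≤ truncTime σ m ω :=
  EReal.toReal_nonneg (le_min (hσ0 ω) (EReal.coe_nonneg.mpr hm))

lemma truncTime_of_le {ω : Ω} (h : σ ω ≤ m) : truncTime σ m ω = (σ ω).toReal := by
  rw [truncTime, min_eq_left h]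

lemma truncTime_of_not_le {ω : Ω} (h : ¬ σ ω ≤ m) : truncTime σ m ω = m := by
  rw [truncTime, min_eq_right (not_le.mp h).le, EReal.toReal_coe]

lemma IsStoppingTimeE.measurableSet_not_le_inter (hσ : IsStoppingTimeE F σ) {t : ℝ} {p : Prop}
    (hp : p → m ≤ t) : MeasurableSet[F t] ({ω | σ ω ≤ m}ᶜ ∩ {_ω | p}) := by
  by_cases h : p
  · simpa [h] using F.mono (hp h) _ (hσ m).compl
  · simp [h]

lemma IsStoppingTimeE.isStoppingTime_truncTime (hσ : IsStoppingTimeE F σ) (hσ0 : ∀ ω, 0 ≤ σ ω) :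
    IsStoppingTime F fun ω => ((truncTime σ m ω : ℝ) : WithTop ℝ) := by
  intro t
  have : {ω | ((truncTime σ m ω : ℝ) : WithTop ℝ) ≤ t} = {ω | σ ω ≤ t} ∪ {_ω | m ≤ t} := by
    ext ω
    rw [mem_ofPred_eq, WithTop.coe_le_coe, ← EReal.coe_le_coe_iff,
      coe_truncTime (EReal.bot_lt_zero.trans_le (hσ0 ω)).ne', min_le_iff]
    simp
  rw [this]
  exact (hσ t).union (MeasurableSet.const _)

lemma MeasurableAtTime.indicator_truncTime (hσ0 : ∀ ω, 0 ≤ σ ω) (hσ : IsStoppingTimeE F σ)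
    {β : Type*} [MeasurableSpace β] [Zero β] {H : Ω → β} (hH : MeasurableAtTime F σ H) :
    MeasurableAtTime F (fun ω => ((truncTime σ m ω : ℝ) : EReal)) ({ω | σ ω ≤ m}.indicator H) := by
  intro B hB t
  have : {ω | σ ω ≤ m}.indicator H ⁻¹' B ∩ {ω | (truncTime σ m ω : EReal) ≤ t} =
      (H ⁻¹' B ∩ {ω | σ ω ≤ ((min t m : ℝ) : EReal)}) ∪
        ({ω | σ ω ≤ m}ᶜ ∩ {_ω | (0 : β) ∈ B ∧ m ≤ t}) := by
    ext ω
    rw [mem_inter_iff, mem_ofPred_eq, coe_truncTime (EReal.bot_lt_zero.trans_le (hσ0 ω)).ne',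
      EReal.coe_strictMono.monotone.map_min]
    by_cases h : σ ω ≤ m
    · simp [h]
    · simp [h, (not_le.mp h).le]
  rw [this]
  exact (F.mono (min_le_left t m) _ (hH B hB _)).union (hσ.measurableSet_not_le_inter And.right)

end Truncation

noncomputable def dyadicCeil (k : ℕ) (x : ℝ) : ℝ := ⌈x * 2 ^ k⌉₊ / 2 ^ k

lemma le_dyadicCeil (k : ℕ) (x : ℝ) : x ≤ dyadicCeil k x :=
  (le_div_iff₀ (by positivity)).mpr (Nat.le_ceil _)

lemma dyadicCeil_lt {x : ℝ} (hx : 0 ≤ x) (k : ℕ) : dyadicCeil k x < x + (2 ^ k)⁻¹ := by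
  rw [dyadicCeil, div_lt_iff₀ (by positivity), add_mul, inv_mul_cancel₀ (by positivity)]
  exact Nat.ceil_lt_add_one (by positivity)

lemma tendsto_dyadicCeil {x : ℝ} (hx : 0 ≤ x) :
    Tendsto (fun k => dyadicCeil k x) atTop (𝓝[≥] x) := by
  have hpow : Tendsto (fun k : ℕ => x + ((2 : ℝ) ^ k)⁻¹) atTop (𝓝 x) := by
    simpa using (tendsto_inv_atTop_zero.comp
      (tendsto_pow_atTop_atTop_of_one_lt one_lt_two)).const_add x
  exact tendsto_nhdsWithin_of_tendsto_nhds_of_eventually_within _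
    (tendsto_of_tendsto_of_tendsto_of_le_of_le tendsto_const_nhds hpow (le_dyadicCeil · x)
      fun k => (dyadicCeil_lt hx k).le)
    (Eventually.of_forall (le_dyadicCeil · x))

section StoppedValue

variable {F : Filtration ℝ mΩ} {ρ : Ω → ℝ}

lemma measurable_min_const_of_isStoppingTime
    (hρ : IsStoppingTime F fun ω => ((ρ ω : ℝ) : WithTop ℝ)) (c : ℝ) :
    Measurable[F c] fun ω => min (ρ ω) c := by
  refine measurable_of_Iic fun t => ?_
  have : (fun ω => min (ρ ω) c) ⁻¹' Iic t = {ω | ρ ω ≤ min t c} ∪ {_ω | c ≤ t} := by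
    ext ω
    rcases le_total c t with h | h <;> simp [h]
  rw [this]
  exact (F.mono (min_le_right t c) _ (measurableSet_le_of_isStoppingTime hρ _)).union
    (MeasurableSet.const _)

lemma measurable_stoppedValue_min [F.IsRightContinuous] {β : Type*} [TopologicalSpace β]
    [TopologicalSpace.PseudoMetrizableSpace β] [MeasurableSpace β] [BorelSpace β] {X : ℝ → Ω → β}
    (hX : AdaptedProc F X) (hRC : RightContinuousPaths X)
    (hρ : IsStoppingTime F fun ω => ((ρ ω : ℝ) : WithTop ℝ)) (hρ0 : ∀ ω, 0 ≤ ρ ω) {c : ℝ}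
    (hc : 0 ≤ c) : Measurable[F c] fun ω => X (min (ρ ω) c) ω := by
  suffices h : ∀ d, c < d → Measurable[F d] fun ω => X (min (ρ ω) c) ω from
    fun B hB => measurableSet_of_forall_gt fun d hd => h d hd hB
  intro d hcd
  have hd : 0 ≤ d := hc.trans hcd.le
  -- `X (ρ ∧ c)` is the right limit of `X` along the dyadic times `⌈(ρ ∧ c) 2^k⌉ / 2^k ∧ d`,
  -- which take countably many values in `[0, d]`.
  have happrox : ∀ k : ℕ, Measurable[F d] fun ω => X (min (dyadicCeil k (min (ρ ω) c)) d) ω := by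
    intro k
    have hidx : Measurable[F d] fun ω => ⌈min (ρ ω) c * 2 ^ k⌉₊ :=
      (Nat.measurable_ceil.comp ((measurable_min_const_of_isStoppingTime hρ c).mul_const _)).mono
        (F.mono hcd.le) le_rfl
    have hX' : Measurable[Prod.instMeasurableSpace (m₂ := F d)]
        fun p : ℕ × Ω => X (min (p.1 / 2 ^ k) d) p.2 :=
      measurable_from_prod_countable_right fun n =>
        (hX (min (n / 2 ^ k) d) (le_min (by positivity) hd)).measurable.mono
          (F.mono (min_le_right _ d)) le_rfl
    exact hX'.comp (hidx.prodMk measurable_id)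
  refine @measurable_of_tendsto_metrizable Ω β (F d) _ _ _ _ _ _ happrox (tendsto_pi_nhds.mpr ?_)
  intro ω
  set x := min (ρ ω) c
  have hx : 0 ≤ x := le_min (hρ0 ω) hc
  have htimes : Tendsto (fun k => min (dyadicCeil k x) d) atTop (𝓝[≥] x) := by
    have hxd : x < d := (min_le_right _ _).trans_lt hcd
    refine (tendsto_dyadicCeil hx).congr' ?_
    filter_upwards [(tendsto_nhdsWithin_iff.mp (tendsto_dyadicCeil hx)).1.eventually
      (gt_mem_nhds hxd)] with k hk
    exact (min_eq_left hk.le).symm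
  exact (hRC ω x).tendsto.comp htimes

end StoppedValue

section SellTime

variable {V : Type*} [NormedAddCommGroup V] [InnerProductSpace ℝ V]
variable {F : Filtration ℝ mΩ} {X : ℝ → Ω → V} {ρ : Ω → ℝ} {G : Ω → V} {a : ℝ}

-- Only rational times, so that `{sellTime < t}` is a countable union of events.
def gainTimes (X : ℝ → Ω → V) (ρ : Ω → ℝ) (G : Ω → V) (a : ℝ) (ω : Ω) : Set ℝ :=
  {t | t ∈ range ((↑) : ℚ → ℝ) ∧ ρ ω ≤ t ∧ a < ⟪G ω, X t ω - X (ρ ω) ω⟫}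

open Classical in
noncomputable def sellTime (X : ℝ → Ω → V) (ρ : Ω → ℝ) (G : Ω → V) (a : ℝ) (ω : Ω) : ℝ :=
  if (gainTimes X ρ G a ω).Nonempty then sInf (gainTimes X ρ G a ω) else ρ ω

lemma gainTimes_bddBelow (ω : Ω) : BddBelow (gainTimes X ρ G a ω) :=
  ⟨ρ ω, fun _ ht => ht.2.1⟩

lemma gainTimes_eq_empty_of_eq_zero {ω : Ω} (hG : G ω = 0) (ha : 0 ≤ a) :
    gainTimes X ρ G a ω = ∅ :=
  eq_empty_of_forall_notMem fun _ ht => (ht.2.2.trans_eq (by rw [hG, inner_zero_left])).not_ge ha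

lemma le_sellTime (ω : Ω) : ρ ω ≤ sellTime X ρ G a ω := by
  unfold sellTime
  split_ifs with h
  · exact le_csInf h fun _ ht => ht.2.1
  · rfl

lemma sellTime_of_not_nonempty {ω : Ω} (h : ¬ (gainTimes X ρ G a ω).Nonempty) :
    sellTime X ρ G a ω = ρ ω :=
  if_neg h

lemma continuousWithinAt_inner_sub (hRC : RightContinuousPaths X) (v w : V) (ω : Ω) (t : ℝ) :
    ContinuousWithinAt (fun s => ⟪v, X s ω - w⟫) (Ici t) t :=
  continuousWithinAt_const.inner ((hRC ω t).sub continuousWithinAt_const)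

lemma le_inner_sellTime (hRC : RightContinuousPaths X) {ω : Ω}
    (h : (gainTimes X ρ G a ω).Nonempty) :
    a ≤ ⟪G ω, X (sellTime X ρ G a ω) ω - X (ρ ω) ω⟫ := by
  rw [sellTime, if_pos h]
  -- the infimum lies in the closure of the gain times, and the gain is right-continuous
  have hmem := ((continuousWithinAt_inner_sub hRC (G ω) (X (ρ ω) ω) ω _).mono
    fun t ht => csInf_le (gainTimes_bddBelow ω) ht).mem_closure_image
      (csInf_mem_closure h (gainTimes_bddBelow ω))
  exact closure_minimal (image_subset_iff.mpr fun t ht => ht.2.2.le) isClosed_Ici hmem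

lemma gainTimes_nonempty (hRC : RightContinuousPaths X) {ω : Ω}
    (h : ∃ t, ρ ω ≤ t ∧ a < ⟪G ω, X t ω - X (ρ ω) ω⟫) : (gainTimes X ρ G a ω).Nonempty := by
  obtain ⟨t, hρt, ht⟩ := h
  obtain ⟨u, hu, hsub⟩ := mem_nhdsGE_iff_exists_Ico_subset.mp
    (continuousWithinAt_inner_sub hRC (G ω) (X (ρ ω) ω) ω t (Ioi_mem_nhds ht))
  obtain ⟨q, htq, hqu⟩ := exists_rat_btwn (mem_Ioi.mp hu)
  exact ⟨q, mem_range_self q, hρt.trans htq.le, hsub ⟨htq.le, hqu⟩⟩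

lemma MeasurableAtTime.measurable_indicator {β : Type*} [MeasurableSpace β] [Zero β]
    {H : Ω → β} (hH : MeasurableAtTime F (fun ω => ((ρ ω : ℝ) : EReal)) H)
    (hρ : IsStoppingTime F fun ω => ((ρ ω : ℝ) : WithTop ℝ)) (t : ℝ) :
    Measurable[F t] ({ω | ρ ω ≤ t}.indicator H) := by
  intro B hB
  have h := hH B hB t
  simp only [EReal.coe_le_coe_iff] at h
  rw [indicator_preimage]
  exact h.union ((measurable_const hB).diff (measurableSet_le_of_isStoppingTime hρ t))

end SellTime

section SellTimeStopping

variable {V : Type*} [NormedAddCommGroup V] [InnerProductSpace ℝ V] [MeasurableSpace V]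
  [BorelSpace V] [SecondCountableTopology V]
variable {F : Filtration ℝ mΩ} [F.IsRightContinuous] {X : ℝ → Ω → V} {ρ : Ω → ℝ} {G : Ω → V}

lemma measurableSet_gain_gt (hX : AdaptedProc F X) (hRC : RightContinuousPaths X)
    (hρ : IsStoppingTime F fun ω => ((ρ ω : ℝ) : WithTop ℝ)) (hρ0 : ∀ ω, 0 ≤ ρ ω)
    (hG : MeasurableAtTime F (fun ω => ((ρ ω : ℝ) : EReal)) G) (a t : ℝ) :
    MeasurableSet[F t] {ω | ρ ω ≤ t ∧ a < ⟪G ω, X t ω - X (ρ ω) ω⟫} := by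
  rcases lt_or_ge t 0 with ht | ht
  · convert @MeasurableSet.empty Ω (F t)
    exact eq_empty_of_forall_notMem fun ω hω => (hρ0 ω).not_gt (hω.1.trans_lt ht)
  have hgain : Measurable[F t]
      fun ω => ⟪{ω | ρ ω ≤ t}.indicator G ω, X t ω - X (min (ρ ω) t) ω⟫ :=
    (hG.measurable_indicator hρ t).inner
      ((hX t ht).measurable.sub (measurable_stoppedValue_min hX hRC hρ hρ0 ht))
  convert (measurableSet_le_of_isStoppingTime hρ t).inter
    (hgain (measurableSet_Ioi (a := a))) using 1
  ext ω
  by_cases h : ρ ω ≤ t <;> simp [h]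

lemma measurableSet_sellTime_lt (hX : AdaptedProc F X) (hRC : RightContinuousPaths X)
    (hρ : IsStoppingTime F fun ω => ((ρ ω : ℝ) : WithTop ℝ)) (hρ0 : ∀ ω, 0 ≤ ρ ω)
    (hG : MeasurableAtTime F (fun ω => ((ρ ω : ℝ) : EReal)) G) {a t : ℝ}
    (hN : MeasurableSet[F t] ({ω | gainTimes X ρ G a ω = ∅} ∩ {ω | ρ ω < t})) :
    MeasurableSet[F t] {ω | sellTime X ρ G a ω < t} := by
  have : {ω | sellTime X ρ G a ω < t} =
      (⋃ q : ℚ, ⋃ (_ : (q : ℝ) < t), {ω | ρ ω ≤ q ∧ a < ⟪G ω, X q ω - X (ρ ω) ω⟫}) ∪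
        ({ω | gainTimes X ρ G a ω = ∅} ∩ {ω | ρ ω < t}) := by
    ext ω
    by_cases h : (gainTimes X ρ G a ω).Nonempty
    · rw [mem_ofPred_eq, sellTime, if_pos h, csInf_lt_iff (gainTimes_bddBelow ω) h, mem_union,
        or_iff_left fun hN => h.ne_empty hN.1]
      simp only [mem_iUnion, mem_ofPred_eq, exists_prop]
      constructor
      · rintro ⟨_, ⟨⟨q, rfl⟩, hρq, hq⟩, hqt⟩
        exact ⟨q, hqt, hρq, hq⟩
      · rintro ⟨q, hqt, hρq, hq⟩
        exact ⟨q, ⟨mem_range_self q, hρq, hq⟩, hqt⟩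
    · rw [mem_ofPred_eq, sellTime_of_not_nonempty h]
      refine ⟨fun hρt => Or.inr ⟨not_nonempty_iff_eq_empty.mp h, hρt⟩, ?_⟩
      rintro (hq | ⟨-, hρt⟩)
      · obtain ⟨q, hqt, hρq, -⟩ := mem_iUnion₂.mp hq
        exact hρq.trans_lt hqt
      · exact hρt
  rw [this]
  exact (MeasurableSet.iUnion fun (q : ℚ) => MeasurableSet.iUnion fun (hq : (q : ℝ) < t) =>
    F.mono hq.le _ (measurableSet_gain_gt hX hRC hρ hρ0 hG a q)).union hN

lemma isStoppingTime_sellTime (hX : AdaptedProc F X) (hRC : RightContinuousPaths X)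
    (hρ : IsStoppingTime F fun ω => ((ρ ω : ℝ) : WithTop ℝ)) (hρ0 : ∀ ω, 0 ≤ ρ ω)
    (hG : MeasurableAtTime F (fun ω => ((ρ ω : ℝ) : EReal)) G) {a : ℝ}
    (hN : ∀ t, MeasurableSet[F t] ({ω | gainTimes X ρ G a ω = ∅} ∩ {ω | ρ ω < t})) :
    IsStoppingTime F fun ω => ((sellTime X ρ G a ω : ℝ) : WithTop ℝ) :=
  isStoppingTime_of_measurableSet_lt_of_isRightContinuous fun t => by
    simpa using measurableSet_sellTime_lt hX hRC hρ hρ0 hG (hN t)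

theorem exists_isArbitrage_of_gainTimes {P : Measure Ω} (hX : AdaptedProc F X)
    (hRC : RightContinuousPaths X) (hρ : IsStoppingTime F fun ω => ((ρ ω : ℝ) : WithTop ℝ))
    (hρ0 : ∀ ω, 0 ≤ ρ ω) (hG : MeasurableAtTime F (fun ω => ((ρ ω : ℝ) : EReal)) G) {a : ℝ}
    (ha : 0 < a) (hN : ∀ t, MeasurableSet[F t] ({ω | gainTimes X ρ G a ω = ∅} ∩ {ω | ρ ω < t}))
    (hpos : 0 < P {ω | (gainTimes X ρ G a ω).Nonempty}) :
    ∃ Φ : SimpleStrategy F V, IsArbitrage P X Φ := by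
  set Φ := pairStrategy hρ0 le_sellTime hρ (isStoppingTime_sellTime hX hRC hρ hρ0 hG hN) hG
  have hwealth : ∀ ω, (gainTimes X ρ G a ω).Nonempty → a ≤ wealthEnd X Φ ω := fun ω h => by
    simpa [Φ, wealthEnd_pairStrategy] using le_inner_sellTime hRC h
  have hzero : ∀ ω, ¬ (gainTimes X ρ G a ω).Nonempty → wealthEnd X Φ ω = 0 := fun ω h => by
    simp [Φ, wealthEnd_pairStrategy, sellTime_of_not_nonempty h]
  refine ⟨Φ, Eventually.of_forall fun ω => ?_, hpos.trans_le (measure_mono fun ω h => ?_)⟩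
  · by_cases h : (gainTimes X ρ G a ω).Nonempty
    exacts [ha.le.trans (hwealth ω h), (hzero ω h).ge]
  · exact ha.trans_le (hwealth ω h)

end SellTimeStopping

section Obvious

variable {V : Type*} [NormedAddCommGroup V] [InnerProductSpace ℝ V]
variable {F : Filtration ℝ mΩ} {P : Measure Ω} {X : ℝ → Ω → V} {σ : Ω → EReal} {H : Ω → V}

lemma exists_nat_measure_le_ne_zero (h : 0 < P {ω | σ ω < ⊤}) :
    ∃ m : ℕ, P {ω | σ ω ≤ ((m : ℝ) : EReal)} ≠ 0 := by
  by_contra! hzero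
  refine h.ne' (measure_mono_null (fun ω hω => mem_iUnion.mpr ?_) (measure_iUnion_null hzero))
  obtain ⟨m, hm⟩ := exists_nat_ge (σ ω).toReal
  exact ⟨m, (EReal.le_coe_toReal (ne_of_lt hω)).trans (EReal.coe_le_coe_iff.mpr hm)⟩

lemma ae_gainTimes_nonempty (hRC : RightContinuousPaths X) (hσ0 : ∀ ω, 0 ≤ σ ω) {ε : ℝ}
    (hε : 0 < ε) (m : ℝ)
    (hnull : P ({ω | σ ω < ⊤} ∩ {ω | ∃ δ : ℝ, δ < ε ∧ ∀ t : ℝ, σ ω ≤ (t : EReal) →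
      ⟪H ω, X t ω - X (σ ω).toReal ω⟫ ≤ δ}) = 0) :
    ∀ᵐ ω ∂P, σ ω ≤ m →
      (gainTimes X (truncTime σ m) ({ω | σ ω ≤ m}.indicator H) (ε / 2) ω).Nonempty := by
  filter_upwards [measure_eq_zero_iff_ae_notMem.mp hnull] with ω hω hσm
  have hbig : ¬ ∀ t : ℝ, σ ω ≤ t → ⟪H ω, X t ω - X (σ ω).toReal ω⟫ ≤ ε / 2 :=
    fun h => hω ⟨hσm.trans_lt (EReal.coe_lt_top m), ε / 2, half_lt_self hε, h⟩
  simp only [not_forall, not_le] at hbig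
  obtain ⟨t, hσt, ht⟩ := hbig
  refine gainTimes_nonempty hRC ⟨t, ?_, ?_⟩
  · simpa [truncTime_of_le hσm] using
      EReal.toReal_le_toReal hσt (EReal.bot_lt_zero.trans_le (hσ0 ω)).ne' (EReal.coe_ne_top t)
  · simpa [truncTime_of_le hσm, hσm] using ht

lemma measurableSet_gainTimes_eq_empty_inter (hUC : UsualConditions F P)
    (hσ : IsStoppingTimeE F σ) {m a : ℝ} (ha : 0 ≤ a)
    (hgain : ∀ᵐ ω ∂P, σ ω ≤ m →
      (gainTimes X (truncTime σ m) ({ω | σ ω ≤ m}.indicator H) a ω).Nonempty) (t : ℝ) :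
    MeasurableSet[F t] ({ω | gainTimes X (truncTime σ m) ({ω | σ ω ≤ m}.indicator H) a ω = ∅} ∩
      {ω | truncTime σ m ω < t}) := by
  set S := gainTimes X (truncTime σ m) ({ω | σ ω ≤ m}.indicator H) a
  have : {ω | S ω = ∅} ∩ {ω | truncTime σ m ω < t} =
      ({ω | σ ω ≤ m ∧ S ω = ∅} ∩ {ω | truncTime σ m ω < t}) ∪ ({ω | σ ω ≤ m}ᶜ ∩ {_ω | m < t}) := by
    ext ω
    by_cases h : σ ω ≤ m
    · simp [h]
    · have hS : S ω = ∅ :=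
        gainTimes_eq_empty_of_eq_zero (indicator_of_notMem (s := {ω | σ ω ≤ m}) h H) ha
      simp [h, hS, truncTime_of_not_le h]
  rw [this]
  refine (hUC.2 t _ (measure_mono_null ?_ (ae_iff.mp hgain))).union
    (hσ.measurableSet_not_le_inter le_of_lt)
  exact fun ω ⟨⟨hσm, hS⟩, _⟩ h => (h hσm).ne_empty hS

end Obvious

theorem statement0_general {Ω : Type*} {mΩ : MeasurableSpace Ω} (P : Measure Ω)
    (F : Filtration ℝ mΩ) (hUC : UsualConditions F P) (D : ℕ)
    (X : ℝ → Ω → EuclideanSpace ℝ (Fin D))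
    (hAdapted : AdaptedProc F X) (hRC : RightContinuousPaths X)
    (hNOA : ¬ NOA F P X) :
    ∃ Φ : SimpleStrategy F (EuclideanSpace ℝ (Fin D)), IsArbitrage P X Φ := by
  simp only [NOA, not_forall, not_lt, nonpos_iff_eq_zero, exists_prop] at hNOA
  obtain ⟨σ, hσ, hσ0, hσfin, H, hH, ε, hε, hnull⟩ := hNOA
  have := hUC.isRightContinuous
  obtain ⟨m, hm⟩ := exists_nat_measure_le_ne_zero hσfin
  have hgain := ae_gainTimes_nonempty hRC hσ0 hε m hnull
  refine exists_isArbitrage_of_gainTimes hAdapted hRC (hσ.isStoppingTime_truncTime hσ0)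
    (truncTime_nonneg hσ0 m.cast_nonneg) (hH.1.indicator_truncTime hσ0 hσ) (half_pos hε)
    (measurableSet_gainTimes_eq_empty_inter hUC hσ (half_pos hε).le hgain) ?_
  exact (pos_iff_ne_zero.mpr hm).trans_le (measure_mono_ae (hgain.mono fun ω h => h))

/-- Proposition: obvious arbitrage. If the right-continuous adapted
`ℝ^D`-valued process `X` does not satisfy (NOA), then `X` admits a simple arbitrage. -/
theorem statement0 {Ω : Type*} {mΩ : MeasurableSpace Ω} (P : Measure Ω) [IsProbabilityMeasure P]
    (F : Filtration ℝ mΩ) (hUC : UsualConditions F P) (D : ℕ)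
    (X : ℝ → Ω → EuclideanSpace ℝ (Fin D))
    (hAdapted : AdaptedProc F X) (hRC : RightContinuousPaths X)
    (hNOA : ¬ NOA F P X) :
    ∃ Φ : SimpleStrategy F (EuclideanSpace ℝ (Fin D)), IsArbitrage P X Φ :=
  statement0_general P F hUC D X hAdapted hRC hNOA

end SimpleArbitrage
end

section
/- Let X be a right-continuous adapted ℝ^D-valued process on a filtered probability space satisfying the usual conditions. If X satisfies the no obvious arbitrage condition (NOA), then every simple arbitrage for X is 0-admissible, i.e., its wealth process from initial capital 0 satisfies inf_{t∈[0,∞)} V_t(Φ;0) ≥ 0 P-almost surely. -/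
open MeasureTheory ProbabilityTheory Filter Set
open scoped ENNReal NNReal RealInnerProductSpace

namespace SimpleArbitrage

variable {Ω : Type*} {mΩ : MeasurableSpace Ω}
variable {E : Type*} [NormedAddCommGroup E] [InnerProductSpace ℝ E] [MeasurableSpace E]

/-!
By backward induction over the trading dates, for every `η > 0` the wealth almost surely never
falls to `-η` after `τ_j`; the case `j = n` is `V_∞ ≥ 0`.

For the step from `j + 1` to `j`, suppose this fails with positive probability, and restrict to
a part of that event on which `‖φ_j‖ ≤ K`. Let `σ` be the infimum of the rational times after
`τ_j` at which the wealth is `≤ -η/2`: by right-continuity of the paths `σ` is finite there and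
`V_σ ≤ -η/2`, and by right-continuity of the filtration it is a stopping time. (NOA) at `σ` in
the direction `φ_j / ‖φ_j‖` with `ε = η / (4K)` yields, with positive probability, paths on which
`φ_j` gains less than `η/4` after `σ`. As only `φ_j` is held up to `τ_{j+1}`, on these paths the
wealth is `≤ -η/4` at `max σ τ_{j+1}`, contradicting the induction hypothesis.
-/

open Topology

section Strategy

variable {F : Filtration ℝ mΩ} {X : ℝ → Ω → E}

namespace SimpleStrategy

lemma τ_le_τ {V : Type*} [MeasurableSpace V] (Φ : SimpleStrategy F V) {a b : ℕ} (hab : a ≤ b)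
    (hb : b ≤ Φ.n) (ω : Ω) : Φ.τ a ω ≤ Φ.τ b ω := by
  induction b, hab using Nat.le_induction with
  | base => exact le_rfl
  | succ b hab ih => exact (ih (by omega)).trans (Φ.τ_mono b (by omega) ω)

lemma τ_nonneg {V : Type*} [MeasurableSpace V] (Φ : SimpleStrategy F V) {a : ℕ} (ha : a ≤ Φ.n)
    (ω : Ω) : 0 ≤ Φ.τ a ω :=
  Φ.τ_zero ω ▸ Φ.τ_le_τ (Nat.zero_le a) ha ω

end SimpleStrategy

lemma wealth_of_subsingleton [Subsingleton E] (Φ : SimpleStrategy F E) (t : ℝ) (ω : Ω) :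
    wealth X Φ t ω = 0 :=
  Finset.sum_eq_zero fun j _ => by rw [Subsingleton.elim (Φ.φ j ω) 0, inner_zero_left]

lemma wealth_eq_wealthEnd (Φ : SimpleStrategy F E) {ω : Ω} {t : ℝ} (ht : Φ.τ Φ.n ω ≤ t) :
    wealth X Φ t ω = wealthEnd X Φ ω := by
  refine Finset.sum_congr rfl fun i hi => ?_
  have hi := Finset.mem_range.1 hi
  rw [min_eq_right ((Φ.τ_le_τ hi le_rfl ω).trans ht),
    min_eq_right ((Φ.τ_le_τ hi.le le_rfl ω).trans ht)]

lemma wealth_eq_add_inner (Φ : SimpleStrategy F E) {j : ℕ} (hj : j < Φ.n) {ω : Ω} {s t : ℝ}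
    (hs : Φ.τ j ω ≤ s) (hst : s ≤ t) (ht : t ≤ Φ.τ (j + 1) ω) :
    wealth X Φ t ω = wealth X Φ s ω + ⟪Φ.φ j ω, X t ω - X s ω⟫ := by
  have key : ∀ i ∈ Finset.range Φ.n,
      ⟪Φ.φ i ω, X (min t (Φ.τ (i + 1) ω)) ω - X (min t (Φ.τ i ω)) ω⟫ =
      ⟪Φ.φ i ω, X (min s (Φ.τ (i + 1) ω)) ω - X (min s (Φ.τ i ω)) ω⟫ +
      if i = j then ⟪Φ.φ j ω, X t ω - X s ω⟫ else 0 := by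
    intro i hi
    rcases lt_trichotomy i j with h | rfl | h
    · have h1 : Φ.τ (i + 1) ω ≤ s := (Φ.τ_le_τ h hj.le ω).trans hs
      have h2 : Φ.τ i ω ≤ s := (Φ.τ_le_τ i.le_succ (by omega) ω).trans h1
      rw [if_neg h.ne, add_zero, min_eq_right h1, min_eq_right (h1.trans hst),
        min_eq_right h2, min_eq_right (h2.trans hst)]
    · rw [if_pos rfl, min_eq_left ht, min_eq_left (hst.trans ht), min_eq_right (hs.trans hst),
        min_eq_right hs, ← inner_add_right, sub_add_sub_cancel']
    · have hi : i < Φ.n := Finset.mem_range.1 hi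
      have h1 : t ≤ Φ.τ i ω := ht.trans (Φ.τ_le_τ h hi.le ω)
      have h2 : t ≤ Φ.τ (i + 1) ω := h1.trans (Φ.τ_mono i hi ω)
      rw [if_neg h.ne', add_zero, min_eq_left h2, min_eq_left (hst.trans h2), min_eq_left h1,
        min_eq_left (hst.trans h1), sub_self, sub_self]
  rw [wealth, wealth, Finset.sum_congr rfl key, Finset.sum_add_distrib, Finset.sum_ite_eq',
    if_pos (Finset.mem_range.2 hj)]

lemma continuousWithinAt_wealth (hRC : RightContinuousPaths X) (Φ : SimpleStrategy F E)
    (ω : Ω) (t : ℝ) : ContinuousWithinAt (fun s => wealth X Φ s ω) (Ici t) t := by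
  have hstop : ∀ c : ℝ, ContinuousWithinAt (fun s => X (min s c) ω) (Ici t) t := fun c =>
    (hRC ω (min t c)).comp (f := fun s => min s c)
      (continuous_id.min continuous_const).continuousWithinAt fun _ hs => min_le_min_right c hs
  exact tendsto_finsetSum _ fun i _ =>
    continuousWithinAt_const.inner ((hstop _).sub (hstop _))

lemma wealth_eq_sum_ite (Φ : SimpleStrategy F E) (q : ℝ) (ω : Ω) :
    wealth X Φ q ω = ∑ i ∈ Finset.range Φ.n,
      ⟪if ((Φ.τ i ω : ℝ) : EReal) ≤ q then Φ.φ i ω else 0,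
        X (min q (Φ.τ (i + 1) ω)) ω - X (min q (Φ.τ i ω)) ω⟫ := by
  refine Finset.sum_congr rfl fun i hi => ?_
  split_ifs with hτ
  · rfl
  · have hqτ : q ≤ Φ.τ i ω := (EReal.coe_lt_coe_iff.1 (not_le.1 hτ)).le
    rw [min_eq_left hqτ, min_eq_left (hqτ.trans (Φ.τ_mono i (Finset.mem_range.1 hi) ω)),
      sub_self, inner_zero_right, inner_zero_right]

end Strategy

section Measurability

/-- Approximate `u` from the right by the dyadic times `⌈2ⁿ u⌉ / 2ⁿ`, clamped to `[a, b]`;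
each approximant has countable range. -/
lemma measurable_eval_of_rightContinuous {β : Type*} [TopologicalSpace β]
    [TopologicalSpace.PseudoMetrizableSpace β] [MeasurableSpace β] [BorelSpace β]
    {m : MeasurableSpace Ω} {Y : ℝ → Ω → β} (hY : RightContinuousPaths Y) {a b : ℝ} (hab : a ≤ b)
    (hYm : ∀ s ∈ Icc a b, Measurable[m] (Y s)) {u : Ω → ℝ} (hu : Measurable[m] u)
    (hub : ∀ ω, u ω ∈ Icc a b) : Measurable[m] fun ω => Y (u ω) ω := by
  set T : ℕ → ℤ → ℝ := fun n k => max a (min b (k / 2 ^ n))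
  have hT : ∀ n k, T n k ∈ Icc a b := fun n k => ⟨le_max_left _ _, max_le hab (min_le_left _ _)⟩
  have hmeas : ∀ n, Measurable[m] fun ω => Y (T n ⌈u ω * 2 ^ n⌉) ω := fun n =>
    (measurable_from_prod_countable_left (f := fun p : Ω × ℤ => Y (T n p.2) p.1)
      fun k => hYm _ (hT n k)).comp
      (measurable_id.prodMk (Int.measurable_ceil.comp (hu.mul_const _)))
  refine measurable_of_tendsto_metrizable hmeas (tendsto_pi_nhds.2 fun ω => ?_)
  have hbounds : ∀ n : ℕ, u ω ≤ T n ⌈u ω * 2 ^ n⌉ ∧ T n ⌈u ω * 2 ^ n⌉ ≤ u ω + (1 / 2) ^ n := by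
    intro n
    have h2n : (0 : ℝ) < 2 ^ n := by positivity
    have hlow : u ω ≤ ⌈u ω * 2 ^ n⌉ / 2 ^ n := (le_div_iff₀ h2n).2 (Int.le_ceil _)
    have hup : (⌈u ω * 2 ^ n⌉ : ℝ) / 2 ^ n ≤ u ω + (1 / 2) ^ n := by
      rw [div_le_iff₀ h2n, add_mul, one_div_pow, one_div_mul_cancel h2n.ne']
      exact (Int.ceil_lt_add_one _).le
    have hpos : (0 : ℝ) < (1 / 2) ^ n := by positivity
    exact ⟨(le_min (hub ω).2 hlow).trans (le_max_right _ _),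
      max_le (by linarith [(hub ω).1]) ((min_le_right _ _).trans hup)⟩
  have hright : Tendsto (fun n : ℕ => T n ⌈u ω * 2 ^ n⌉) atTop (𝓝[≥] u ω) := by
    refine tendsto_nhdsWithin_of_tendsto_nhds_of_eventually_within _ ?_
      (Eventually.of_forall fun n => (hbounds n).1)
    refine tendsto_of_tendsto_of_tendsto_of_le_of_le tendsto_const_nhds ?_
      (fun n => (hbounds n).1) fun n => (hbounds n).2
    simpa using tendsto_const_nhds.add
      (tendsto_pow_atTop_nhds_zero_of_lt_one (by norm_num : (0 : ℝ) ≤ 1 / 2) (by norm_num))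
  exact (hY ω (u ω)).tendsto.comp hright

variable {F : Filtration ℝ mΩ}

lemma MeasurableAtTime.of_le {τ σ : Ω → EReal} {α : Type*} [MeasurableSpace α] {f : Ω → α}
    (hf : MeasurableAtTime F τ f) (hσ : IsStoppingTimeE F σ) (hτσ : ∀ ω, τ ω ≤ σ ω) :
    MeasurableAtTime F σ f := by
  intro B hB t
  have : f ⁻¹' B ∩ {ω | σ ω ≤ t} = (f ⁻¹' B ∩ {ω | τ ω ≤ t}) ∩ {ω | σ ω ≤ t} := by
    ext ω
    exact ⟨fun h => ⟨⟨h.1, (hτσ ω).trans h.2⟩, h.2⟩, fun h => ⟨h.1.1, h.2⟩⟩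
  rw [this]
  exact (hf B hB t).inter (hσ t)

lemma MeasurableAtTime.measurable_ite {σ : Ω → EReal} {α : Type*} [MeasurableSpace α]
    {f : Ω → α} (hf : MeasurableAtTime F σ f) (t : ℝ) (c : α) :
    Measurable[F t] fun ω => if σ ω ≤ t then f ω else c := by
  intro B hB
  have hle : MeasurableSet[F t] {ω | σ ω ≤ t} := by simpa using hf univ MeasurableSet.univ t
  have : (fun ω => if σ ω ≤ t then f ω else c) ⁻¹' B =
      f ⁻¹' B ∩ {ω | σ ω ≤ t} ∪ {_ω | c ∈ B} ∩ {ω | σ ω ≤ t}ᶜ := by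
    ext ω; by_cases h : σ ω ≤ t <;> simp [h]
  rw [this]
  exact (hf B hB t).union ((MeasurableSet.const _).inter hle.compl)

lemma measurable_stopped {β : Type*} [TopologicalSpace β]
    [TopologicalSpace.PseudoMetrizableSpace β] [MeasurableSpace β] [BorelSpace β]
    {Y : ℝ → Ω → β} (hAd : AdaptedProc F Y) (hRC : RightContinuousPaths Y) {τ : Ω → ℝ}
    (hτ : IsStoppingTime F fun ω => ((τ ω : ℝ) : WithTop ℝ)) (hτ0 : ∀ ω, 0 ≤ τ ω) {q : ℝ}
    (hq : 0 ≤ q) : Measurable[F q] fun ω => Y (min q (τ ω)) ω := by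
  have hmin : Measurable[F q] fun ω => min q (τ ω) := by
    refine measurable_of_Iic fun x => ?_
    rcases le_or_gt q x with hqx | hxq
    · have : (fun ω => min q (τ ω)) ⁻¹' Iic x = univ :=
        eq_univ_of_forall fun ω => (min_le_left _ _).trans hqx
      rw [this]
      exact .univ
    · have : (fun ω => min q (τ ω)) ⁻¹' Iic x = {ω | ((τ ω : ℝ) : WithTop ℝ) ≤ x} := by
        ext ω; simp [hxq.not_ge]
      rw [this]
      exact F.mono hxq.le _ (hτ x)
  exact measurable_eval_of_rightContinuous hRC hq
    (fun s hs => (hAd s hs.1).measurable.mono (F.mono hs.2) le_rfl) hmin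
    fun ω => ⟨le_min hq (hτ0 ω), min_le_left _ _⟩

variable [BorelSpace E] [SecondCountableTopology E] {X : ℝ → Ω → E}

lemma measurable_wealth (hAd : AdaptedProc F X) (hRC : RightContinuousPaths X)
    (Φ : SimpleStrategy F E) {q : ℝ} (hq : 0 ≤ q) : Measurable[F q] (wealth X Φ q) := by
  rw [funext (wealth_eq_sum_ite Φ q)]
  refine Finset.measurable_sum _ fun i hi => ?_
  have hi : i < Φ.n := Finset.mem_range.1 hi
  exact ((Φ.φ_meas i hi).measurable_ite q 0).inner
    ((measurable_stopped hAd hRC (Φ.τ_stopping _ hi) (Φ.τ_nonneg hi) hq).sub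
      (measurable_stopped hAd hRC (Φ.τ_stopping _ hi.le) (Φ.τ_nonneg hi.le) hq))

end Measurability

section Debut

variable {F : Filtration ℝ mΩ}

lemma isStoppingTimeE_of_measurableSet_lt (hF : ∀ t : ℝ, F t = ⨅ s : Ioi t, F (s : ℝ))
    {σ : Ω → EReal} (hσ : ∀ t : ℝ, MeasurableSet[F t] {ω | σ ω < t}) : IsStoppingTimeE F σ := by
  intro t
  rw [hF t, MeasurableSpace.measurableSet_iInf]
  rintro ⟨s, hts⟩
  have : {ω | σ ω ≤ t} = ⋂ (q : ℚ) (_ : t < q ∧ (q : ℝ) < s), {ω | σ ω < (q : ℝ)} := by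
    ext ω
    simp only [mem_ofPred_eq, mem_iInter]
    refine ⟨fun h q hq => h.trans_lt (EReal.coe_lt_coe_iff.2 hq.1), fun h => ?_⟩
    by_contra! hlt
    obtain ⟨q, htq, hqσ⟩ := EReal.exists_rat_btwn_of_lt (lt_min hlt (EReal.coe_lt_coe_iff.2 hts))
    have hqs : (q : ℝ) < s := EReal.coe_lt_coe_iff.1 (hqσ.trans_le (min_le_right _ _))
    exact (h q ⟨EReal.coe_lt_coe_iff.1 htq, hqs⟩).not_ge (hqσ.le.trans (min_le_left _ _))
  rw [this]
  exact .iInter fun q => .iInter fun hq => F.mono hq.2.le _ (hσ q)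

noncomputable def ratDebut (A : ℚ → Set Ω) (ω : Ω) : EReal :=
  ⨅ (q : ℚ) (_ : ω ∈ A q), ((q : ℝ) : EReal)

variable {A : ℚ → Set Ω} {ω : Ω}

lemma ratDebut_le {q : ℚ} (h : ω ∈ A q) : ratDebut A ω ≤ (q : ℝ) := iInf₂_le q h

lemma le_ratDebut {c : EReal} (h : ∀ q, ω ∈ A q → c ≤ (q : ℝ)) : c ≤ ratDebut A ω :=
  le_iInf₂ h

lemma ratDebut_lt_iff {c : EReal} : ratDebut A ω < c ↔ ∃ q, ω ∈ A q ∧ ((q : ℝ) : EReal) < c := by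
  simp [ratDebut, iInf_lt_iff]

lemma isStoppingTimeE_ratDebut (hF : ∀ t : ℝ, F t = ⨅ s : Ioi t, F (s : ℝ))
    (hA : ∀ q : ℚ, MeasurableSet[F q] (A q)) : IsStoppingTimeE F (ratDebut A) := by
  refine isStoppingTimeE_of_measurableSet_lt hF fun t => ?_
  have : {ω | ratDebut A ω < t} = ⋃ (q : ℚ) (_ : (q : ℝ) < t), A q := by
    ext ω
    simp [ratDebut_lt_iff, and_comm]
  rw [this]
  exact .iUnion fun q => .iUnion fun hq => F.mono hq.le _ (hA q)

lemma le_of_ratDebut_eq {f : ℝ → ℝ} {r c : ℝ} (hf : ContinuousWithinAt f (Ici r) r)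
    (hr : ratDebut A ω = r) (hA : ∀ q, ω ∈ A q → f q ≤ c) : f r ≤ c := by
  by_contra! hcr
  obtain ⟨u, hru, hu⟩ := mem_nhdsGE_iff_exists_Ico_subset.1 (hf.eventually (lt_mem_nhds hcr))
  obtain ⟨q, hq, hqu⟩ := ratDebut_lt_iff.1 (hr ▸ EReal.coe_lt_coe_iff.2 hru)
  have hrq : r ≤ q := EReal.coe_le_coe_iff.1 (hr ▸ ratDebut_le hq)
  exact (hu ⟨hrq, EReal.coe_lt_coe_iff.1 hqu⟩ : c < f q).not_ge (hA q hq)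

end Debut

section Direction

variable {V : Type*} [NormedAddCommGroup V] [InnerProductSpace ℝ V]

open Classical in
noncomputable def unitDir (e x : V) : V := if x = 0 then e else NormedSpace.normalize x

lemma measurable_unitDir [MeasurableSpace V] [BorelSpace V] (e : V) : Measurable (unitDir e) :=
  Measurable.ite (measurableSet_singleton (0 : V) : MeasurableSet {x : V | x = 0})
    measurable_const ((measurable_norm.inv).smul measurable_id)

lemma norm_unitDir {e : V} (he : ‖e‖ = 1) (x : V) : ‖unitDir e x‖ = 1 := by
  unfold unitDir
  split_ifs with hx
  exacts [he, NormedSpace.norm_normalize hx]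

lemma inner_eq_norm_mul_inner_unitDir (e x d : V) : ⟪x, d⟫ = ‖x‖ * ⟪unitDir e x, d⟫ := by
  unfold unitDir
  split_ifs with hx
  · simp [hx]
  · conv_lhs => rw [← NormedSpace.norm_smul_normalize x]
    rw [real_inner_smul_left]

end Direction

section Loss

variable {F : Filtration ℝ mΩ} {X : ℝ → Ω → E}

def lossAfter (X : ℝ → Ω → E) (Φ : SimpleStrategy F E) (j : ℕ) (η : ℝ) : Set Ω :=
  {ω | ∃ t, Φ.τ j ω ≤ t ∧ wealth X Φ t ω ≤ -η}

def boundedLossAt (X : ℝ → Ω → E) (Φ : SimpleStrategy F E) (j : ℕ) (η K : ℝ) (q : ℚ) :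
    Set Ω :=
  {ω | Φ.τ j ω ≤ q ∧ wealth X Φ q ω ≤ -η ∧ ‖Φ.φ j ω‖ ≤ K}

lemma measure_lossAfter_eq_zero_of_wealthEnd_nonneg {P : Measure Ω} {Φ : SimpleStrategy F E}
    (hV : ∀ᵐ ω ∂P, 0 ≤ wealthEnd X Φ ω) {η : ℝ} (hη : 0 < η) : P (lossAfter X Φ Φ.n η) = 0 := by
  refine measure_mono_null (fun ω ⟨t, ht, hVt⟩ => ?_) (ae_iff.1 hV)
  rw [mem_ofPred_eq, wealth_eq_wealthEnd Φ ht] at *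
  linarith

lemma lossAfter_inter_subset (hRC : RightContinuousPaths X) (Φ : SimpleStrategy F E) (j : ℕ)
    {η : ℝ} (hη : 0 < η) (K : ℝ) :
    lossAfter X Φ j η ∩ {ω | ‖Φ.φ j ω‖ ≤ K} ⊆
      {ω | ratDebut (boundedLossAt X Φ j (η / 2) K) ω < ⊤} := by
  rintro ω ⟨⟨t, hτt, hVt⟩, hφ⟩
  have hnear : ∀ᶠ s in 𝓝[≥] t, wealth X Φ s ω < -(η / 2) :=
    (continuousWithinAt_wealth hRC Φ ω t).eventually (gt_mem_nhds (by linarith))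
  obtain ⟨u, htu, hu⟩ := mem_nhdsGE_iff_exists_Ico_subset.1 hnear
  obtain ⟨q, htq, hqu⟩ := exists_rat_btwn (show t < u from htu)
  have hq : ω ∈ boundedLossAt X Φ j (η / 2) K q :=
    ⟨hτt.trans htq.le, (hu ⟨htq.le, hqu⟩ : wealth X Φ q ω < _).le, hφ⟩
  exact (ratDebut_le hq).trans_lt (EReal.coe_lt_top _)

lemma exists_of_ratDebut_boundedLossAt_lt_top (hRC : RightContinuousPaths X)
    {Φ : SimpleStrategy F E} {j : ℕ} {η K : ℝ} {ω : Ω}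
    (hσ : ratDebut (boundedLossAt X Φ j η K) ω < ⊤) :
    ∃ r : ℝ, ratDebut (boundedLossAt X Φ j η K) ω = r ∧ Φ.τ j ω ≤ r ∧
      wealth X Φ r ω ≤ -η ∧ ‖Φ.φ j ω‖ ≤ K := by
  obtain ⟨q, hq, -⟩ := ratDebut_lt_iff.1 hσ
  have hτσ : ((Φ.τ j ω : ℝ) : EReal) ≤ ratDebut (boundedLossAt X Φ j η K) ω :=
    le_ratDebut fun q hq => EReal.coe_le_coe_iff.2 hq.1
  have hr := (EReal.coe_toReal hσ.ne (ne_bot_of_le_ne_bot (EReal.coe_ne_bot _) hτσ)).symm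
  refine ⟨_, hr, EReal.coe_le_coe_iff.1 (hr ▸ hτσ),
    le_of_ratDebut_eq (continuousWithinAt_wealth hRC Φ ω _) hr fun q hq => hq.2.1, hq.2.2⟩

lemma mem_lossAfter_succ {Φ : SimpleStrategy F E} {j : ℕ} (hj : j < Φ.n) {ω : Ω} {r a b : ℝ}
    (hb : 0 ≤ b) (hr : Φ.τ j ω ≤ r) (hVr : wealth X Φ r ω ≤ -a)
    (hgain : ∀ t, r ≤ t → ⟪Φ.φ j ω, X t ω - X r ω⟫ ≤ b) : ω ∈ lossAfter X Φ (j + 1) (a - b) := by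
  rcases le_total (Φ.τ (j + 1) ω) r with h | h
  · exact ⟨r, h, by linarith⟩
  · refine ⟨_, le_rfl, ?_⟩
    rw [wealth_eq_add_inner Φ hj hr h le_rfl]
    linarith [hgain _ h]

lemma exists_pos_measure_inter_le_ne_zero {P : Measure Ω} {s : Set Ω} (f : Ω → ℝ)
    (hs : P s ≠ 0) : ∃ K : ℝ, 0 < K ∧ P (s ∩ {ω | f ω ≤ K}) ≠ 0 := by
  by_contra! h
  refine hs (measure_mono_null (fun ω hω => ?_) (measure_iUnion_null fun n : ℕ =>
    h (n + 1) n.cast_add_one_pos))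
  obtain ⟨n, hn⟩ := exists_nat_ge (f ω)
  exact mem_iUnion.2 ⟨n, hω, show f ω ≤ n + 1 by linarith⟩

end Loss

section Admissibility

variable [BorelSpace E] [SecondCountableTopology E] {F : Filtration ℝ mΩ} {P : Measure Ω}
  {X : ℝ → Ω → E}

lemma measurableSet_boundedLossAt (hAd : AdaptedProc F X) (hRC : RightContinuousPaths X)
    {Φ : SimpleStrategy F E} {j : ℕ} (hj : j < Φ.n) (η K : ℝ) (q : ℚ) :
    MeasurableSet[F q] (boundedLossAt X Φ j η K q) := by
  rcases le_or_gt 0 (q : ℝ) with hq | hq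
  · have : boundedLossAt X Φ j η K q = wealth X Φ q ⁻¹' Iic (-η) ∩
        (Φ.φ j ⁻¹' Metric.closedBall 0 K ∩ {ω | ((Φ.τ j ω : ℝ) : EReal) ≤ (q : ℝ)}) := by
      ext ω
      simp only [boundedLossAt, mem_ofPred_eq, mem_inter_iff, mem_preimage, mem_Iic,
        mem_closedBall_zero_iff, EReal.coe_le_coe_iff]
      tauto
    rw [this]
    exact (measurable_wealth hAd hRC Φ hq measurableSet_Iic).inter
      (Φ.φ_meas j hj _ Metric.isClosed_closedBall.measurableSet q)
  · convert @MeasurableSet.empty Ω (F q)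
    exact eq_empty_of_forall_notMem fun ω hω => (Φ.τ_nonneg hj.le ω).not_gt (hω.1.trans_lt hq)

theorem measure_lossAfter_eq_zero_of_succ [Nontrivial E]
    (hF : ∀ t : ℝ, F t = ⨅ s : Ioi t, F (s : ℝ)) (hAd : AdaptedProc F X)
    (hRC : RightContinuousPaths X) (hNOA : NOA F P X) {Φ : SimpleStrategy F E} {j : ℕ}
    (hj : j < Φ.n) (hnext : ∀ η, 0 < η → P (lossAfter X Φ (j + 1) η) = 0) {η : ℝ} (hη : 0 < η) :
    P (lossAfter X Φ j η) = 0 := by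
  by_contra hloss
  obtain ⟨K, hK, hlossK⟩ := exists_pos_measure_inter_le_ne_zero (fun ω => ‖Φ.φ j ω‖) hloss
  set σ := ratDebut (boundedLossAt X Φ j (η / 2) K)
  have hσ : IsStoppingTimeE F σ :=
    isStoppingTimeE_ratDebut hF (measurableSet_boundedLossAt hAd hRC hj _ K)
  have hτσ : ∀ ω, ((Φ.τ j ω : ℝ) : EReal) ≤ σ ω :=
    fun ω => le_ratDebut fun q hq => EReal.coe_le_coe_iff.2 hq.1
  have hσ0 : ∀ ω, 0 ≤ σ ω :=
    fun ω => (EReal.coe_nonneg.2 (Φ.τ_nonneg hj.le ω)).trans (hτσ ω)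
  have hσfin : 0 < P {ω | σ ω < ⊤} := (pos_iff_ne_zero.2 hlossK).trans_le
    (measure_mono (lossAfter_inter_subset hRC Φ j hη K))
  obtain ⟨e, he⟩ := exists_norm_eq E zero_le_one
  set H := fun ω => unitDir e (Φ.φ j ω)
  have hH : IsDirection F P σ H :=
    ⟨fun B hB => (Φ.φ_meas j hj).of_le hσ hτσ _ (measurable_unitDir e hB),
      ae_of_all _ fun ω => norm_unitDir he _⟩
  have hε : 0 < η / (4 * K) := by positivity
  refine (hNOA σ hσ hσ0 hσfin H hH _ hε).ne'
    (measure_mono_null ?_ (hnext (η / 4) (by positivity)))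
  rintro ω ⟨hfin, δ, hδ, hgain⟩
  obtain ⟨r, hr, hτr, hVr, hφK⟩ := exists_of_ratDebut_boundedLossAt_lt_top hRC hfin
  replace hr : σ ω = r := hr
  rw [hr, EReal.toReal_coe] at hgain
  rw [show η / 4 = η / 2 - η / 4 by ring]
  refine mem_lossAfter_succ hj (by positivity) hτr hVr fun t ht => ?_
  calc ⟪Φ.φ j ω, X t ω - X r ω⟫ = ‖Φ.φ j ω‖ * ⟪H ω, X t ω - X r ω⟫ :=
        inner_eq_norm_mul_inner_unitDir e _ _
    _ ≤ ‖Φ.φ j ω‖ * (η / (4 * K)) :=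
        mul_le_mul_of_nonneg_left ((hgain t (EReal.coe_le_coe_iff.2 ht)).trans hδ.le)
          (norm_nonneg _)
    _ ≤ K * (η / (4 * K)) := mul_le_mul_of_nonneg_right hφK hε.le
    _ = η / 4 := by field_simp

theorem measure_lossAfter_eq_zero [Nontrivial E] (hF : ∀ t : ℝ, F t = ⨅ s : Ioi t, F (s : ℝ))
    (hAd : AdaptedProc F X) (hRC : RightContinuousPaths X) (hNOA : NOA F P X)
    {Φ : SimpleStrategy F E} (hV : ∀ᵐ ω ∂P, 0 ≤ wealthEnd X Φ ω) {j : ℕ} (hj : j ≤ Φ.n)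
    {η : ℝ} (hη : 0 < η) : P (lossAfter X Φ j η) = 0 := by
  induction hj using Nat.decreasingInduction generalizing η with
  | self => exact measure_lossAfter_eq_zero_of_wealthEnd_nonneg hV hη
  | of_succ k hk ih =>
    exact measure_lossAfter_eq_zero_of_succ hF hAd hRC hNOA hk (fun _ => ih) hη

end Admissibility

lemma isAdmissible_zero_of_measure_lossAfter {F : Filtration ℝ mΩ} {P : Measure Ω}
    {X : ℝ → Ω → E} {Φ : SimpleStrategy F E}
    (h : ∀ η, 0 < η → P (lossAfter X Φ 0 η) = 0) : IsAdmissible P X Φ 0 := by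
  have hae : ∀ᵐ ω ∂P, ∀ n : ℕ, ω ∉ lossAfter X Φ 0 (1 / (n + 1)) :=
    ae_all_iff.2 fun n => measure_eq_zero_iff_ae_notMem.1 (h _ (by positivity))
  filter_upwards [hae] with ω hω t ht
  by_contra! hneg
  obtain ⟨n, hn⟩ := exists_nat_one_div_lt (neg_pos.2 (neg_zero (G := ℝ) ▸ hneg))
  exact hω n ⟨t, (Φ.τ_zero ω).trans_le ht, by linarith⟩

theorem statement1_general {Ω : Type*} {mΩ : MeasurableSpace Ω} (P : Measure Ω)
    (F : Filtration ℝ mΩ) (hUC : UsualConditions F P) (D : ℕ)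
    (X : ℝ → Ω → EuclideanSpace ℝ (Fin D))
    (hAdapted : AdaptedProc F X) (hRC : RightContinuousPaths X)
    (hNOA : NOA F P X) :
    ∀ Φ : SimpleStrategy F (EuclideanSpace ℝ (Fin D)),
      IsArbitrage P X Φ → IsAdmissible P X Φ 0 := by
  intro Φ hArb
  rcases subsingleton_or_nontrivial (EuclideanSpace ℝ (Fin D)) with hE | hE
  · exact ae_of_all _ fun ω t _ => (wealth_of_subsingleton Φ t ω).symm ▸ neg_zero.le
  · exact isAdmissible_zero_of_measure_lossAfter fun η hη =>
      measure_lossAfter_eq_zero hUC.1 hAdapted hRC hNOA hArb.1 (Nat.zero_le _) hη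

/-- Proposition: under (NOA), every simple arbitrage is 0-admissible. -/
theorem statement1 {Ω : Type*} {mΩ : MeasurableSpace Ω} (P : Measure Ω) [IsProbabilityMeasure P]
    (F : Filtration ℝ mΩ) (hUC : UsualConditions F P) (D : ℕ)
    (X : ℝ → Ω → EuclideanSpace ℝ (Fin D))
    (hAdapted : AdaptedProc F X) (hRC : RightContinuousPaths X)
    (hNOA : NOA F P X) :
    ∀ Φ : SimpleStrategy F (EuclideanSpace ℝ (Fin D)),
      IsArbitrage P X Φ → IsAdmissible P X Φ 0 :=
  statement1_general P F hUC D X hAdapted hRC hNOA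

end SimpleArbitrage
end

section
/- Let X be a right-continuous adapted ℝ^D-valued process on a filtered probability space satisfying the usual conditions. If X admits a 0-admissible simple arbitrage, then X admits a 0-admissible arbitrage of the particularly simple form H 1_{(σ,τ]}, where σ ≤ τ are bounded stopping times and H is an 𝓕_σ-measurable direction. -/
open MeasureTheory ProbabilityTheory Filter Set
open scoped ENNReal NNReal RealInnerProductSpace

/-! Let `j` be the first index with `P(V_{τ_{j+1}} > 0) > 0`. Then `V_{τ_j} ≤ 0` a.s., while
`V_{τ_j} ≥ 0` by admissibility, so `V_{τ_j} = 0` a.s. and on `[τ_j, τ_{j+1}]` the wealth of `Φ`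
is that of the single trade `φ_j 1_{(τ_j, τ_{j+1}]}`, which is therefore a `0`-admissible
arbitrage. Normalising `φ_j` (and cancelling the trade where `φ_j = 0`) gives a direction, and
stopping everything at a deterministic time `m` with `P(gain > 0, τ_{j+1} ≤ m) > 0` makes the
stopping times bounded. -/

namespace SimpleArbitrage

variable {Ω : Type*} {mΩ : MeasurableSpace Ω}

section StoppingTimes

variable {F : Filtration ℝ mΩ}

theorem isStoppingTime_coe_iff {σ : Ω → ℝ} :
    IsStoppingTime F (fun ω => ((σ ω : ℝ) : WithTop ℝ)) ↔
      ∀ t : ℝ, MeasurableSet[F t] {ω | σ ω ≤ t} := by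
  simp only [IsStoppingTime, WithTop.coe_le_coe]

theorem measurableAtTime_coe_iff {α : Type*} [MeasurableSpace α] {σ : Ω → ℝ} {H : Ω → α} :
    MeasurableAtTime F (fun ω => ((σ ω : ℝ) : EReal)) H ↔
      ∀ B, MeasurableSet B → ∀ t : ℝ, MeasurableSet[F t] (H ⁻¹' B ∩ {ω | σ ω ≤ t}) := by
  simp only [MeasurableAtTime, EReal.coe_le_coe_iff]

theorem MeasurableAtTime.comp {α β : Type*} [MeasurableSpace α] [MeasurableSpace β]
    {σ : Ω → EReal} {H : Ω → α} (hH : MeasurableAtTime F σ H) {g : α → β} (hg : Measurable g) :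
    MeasurableAtTime F σ (g ∘ H) :=
  fun B hB t => hH (g ⁻¹' B) (hg hB) t

theorem isStoppingTime_piecewise_of_le {σ τ : Ω → ℝ}
    (hτ : IsStoppingTime F (fun ω => ((τ ω : ℝ) : WithTop ℝ))) (hστ : ∀ ω, σ ω ≤ τ ω)
    {S : Set Ω} [∀ ω, Decidable (ω ∈ S)] (hS : ∀ t : ℝ, MeasurableSet[F t] (S ∩ {ω | σ ω ≤ t})) :
    IsStoppingTime F (fun ω => ((S.piecewise σ τ ω : ℝ) : WithTop ℝ)) := by
  rw [isStoppingTime_coe_iff] at hτ ⊢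
  intro t
  have hset : {ω | S.piecewise σ τ ω ≤ t} =
      (S ∩ {ω | σ ω ≤ t}) ∪ ({ω | τ ω ≤ t} \ (S ∩ {ω | σ ω ≤ t})) := by
    ext ω
    by_cases hω : ω ∈ S
    · have := hστ ω
      simp only [mem_ofPred_eq, hω, piecewise_eq_of_mem, union_sdiff_self, mem_union,
        mem_inter_iff, true_and, iff_self_or]
      exact fun h => this.trans h
    · simp [hω]
  rw [hset]
  exact (hS t).union ((hτ t).diff (hS t))

theorem MeasurableAtTime.ite_le_min {α : Type*} [MeasurableSpace α] {σ : Ω → ℝ}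
    (hσ : IsStoppingTime F (fun ω => ((σ ω : ℝ) : WithTop ℝ))) {H : Ω → α}
    (hH : MeasurableAtTime F (fun ω => ((σ ω : ℝ) : EReal)) H) (m : ℝ) (a : α) :
    MeasurableAtTime F (fun ω => ((min (σ ω) m : ℝ) : EReal))
      (fun ω => if σ ω ≤ m then H ω else a) := by
  rw [isStoppingTime_coe_iff] at hσ
  rw [measurableAtTime_coe_iff] at hH ⊢
  intro B hB t
  rcases le_or_gt m t with hmt | htm
  · have hset : (fun ω => if σ ω ≤ m then H ω else a) ⁻¹' B ∩ {ω | min (σ ω) m ≤ t} =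
        (H ⁻¹' B ∩ {ω | σ ω ≤ m}) ∪ ({ω | σ ω ≤ m}ᶜ ∩ {_ω | a ∈ B}) := by
      ext ω
      by_cases hω : σ ω ≤ m <;> simp [hω, hmt]
    rw [hset]
    exact F.mono hmt _ ((hH B hB m).union ((hσ m).compl.inter (MeasurableSet.const _)))
  · have hset : (fun ω => if σ ω ≤ m then H ω else a) ⁻¹' B ∩ {ω | min (σ ω) m ≤ t} =
        H ⁻¹' B ∩ {ω | σ ω ≤ t} := by
      ext ω
      by_cases hω : σ ω ≤ t
      · simp [hω, hω.trans htm.le]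
      · simp [hω, htm.not_ge]
    rw [hset]
    exact hH B hB t

end StoppingTimes

theorem exists_nat_measure_inter_le_pos {μ : Measure Ω} {A : Set Ω} (hA : 0 < μ A)
    (f : Ω → ℝ) : ∃ m : ℕ, 0 < μ (A ∩ {ω | f ω ≤ m}) := by
  by_contra! h
  have hcover : A ⊆ ⋃ m : ℕ, A ∩ {ω | f ω ≤ m} := fun ω hω =>
    mem_iUnion.mpr ((exists_nat_ge (f ω)).imp fun _ hm => ⟨hω, hm⟩)
  exact hA.ne' (measure_mono_null hcover (measure_iUnion_null fun m => nonpos_iff_eq_zero.mp (h m)))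

namespace SimpleStrategy

variable {E : Type*} [MeasurableSpace E] {F : Filtration ℝ mΩ} (Φ : SimpleStrategy F E)

theorem τ_le_τ_s2 {i j : ℕ} (hij : i ≤ j) (hj : j ≤ Φ.n) (ω : Ω) : Φ.τ i ω ≤ Φ.τ j ω :=
  monotoneOn_of_le_add_one (f := fun k => Φ.τ k ω) ordConnected_Iic
    (fun k _ _ hk => Φ.τ_mono k hk ω) (hij.trans hj) hj hij

theorem τ_nonneg_s2 {j : ℕ} (hj : j ≤ Φ.n) (ω : Ω) : 0 ≤ Φ.τ j ω :=
  Φ.τ_zero ω ▸ Φ.τ_le_τ_s2 j.zero_le hj ω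

end SimpleStrategy

section PairWealth

variable {E : Type*} [NormedAddCommGroup E] [InnerProductSpace ℝ E] {X : ℝ → Ω → E} {H : Ω → E}
  {σ τ : Ω → ℝ} {t : ℝ} {ω : Ω}

theorem pairWealth_of_le_left (ht : t ≤ σ ω) (hστ : σ ω ≤ τ ω) : pairWealth X H σ τ t ω = 0 := by
  rw [pairWealth, min_eq_left ht, min_eq_left (ht.trans hστ), sub_self, inner_zero_right]

theorem pairWealth_of_eq (hστ : σ ω = τ ω) : pairWealth X H σ τ t ω = 0 := by
  rw [pairWealth, hστ, sub_self, inner_zero_right]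

theorem pairWealth_of_right_le (hστ : σ ω ≤ τ ω) (ht : τ ω ≤ t) :
    pairWealth X H σ τ t ω = ⟪H ω, X (τ ω) ω - X (σ ω) ω⟫ := by
  rw [pairWealth, min_eq_right ht, min_eq_right (hστ.trans ht)]

theorem pairWealth_min_const (m : ℝ) :
    pairWealth X H (fun ω => min (σ ω) m) (fun ω => min (τ ω) m) t ω =
      pairWealth X H σ τ (min t m) ω := by
  simp only [pairWealth]
  ac_rfl

end PairWealth

variable {E : Type*} [NormedAddCommGroup E] [InnerProductSpace ℝ E] [MeasurableSpace E]

structure IsAdmissiblePairArbitrage (F : Filtration ℝ mΩ) (P : Measure Ω) (X : ℝ → Ω → E)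
    (σ τ : Ω → ℝ) (H : Ω → E) : Prop where
  isStoppingTime_left : IsStoppingTime F (fun ω => ((σ ω : ℝ) : WithTop ℝ))
  isStoppingTime_right : IsStoppingTime F (fun ω => ((τ ω : ℝ) : WithTop ℝ))
  nonneg : ∀ ω, 0 ≤ σ ω
  le : ∀ ω, σ ω ≤ τ ω
  measurableAtTime : MeasurableAtTime F (fun ω => ((σ ω : ℝ) : EReal)) H
  wealth_nonneg : ∀ᵐ ω ∂P, ∀ t : ℝ, 0 ≤ t → 0 ≤ pairWealth X H σ τ t ω
  gain_pos : 0 < P {ω | 0 < ⟪H ω, X (τ ω) ω - X (σ ω) ω⟫}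

namespace IsAdmissiblePairArbitrage

variable {F : Filtration ℝ mΩ} {P : Measure Ω} {X : ℝ → Ω → E} {σ τ : Ω → ℝ} {H : Ω → E}

theorem gain_nonneg (h : IsAdmissiblePairArbitrage F P X σ τ H) :
    ∀ᵐ ω ∂P, 0 ≤ ⟪H ω, X (τ ω) ω - X (σ ω) ω⟫ := by
  filter_upwards [h.wealth_nonneg] with ω hω
  rw [← pairWealth_of_right_le (h.le ω) le_rfl]
  exact hω _ ((h.nonneg ω).trans (h.le ω))

theorem existsAdmissiblePairArbitrage (h : IsAdmissiblePairArbitrage F P X σ τ H) {K : ℝ}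
    (hτ : ∀ ω, τ ω ≤ K) (hH : ∀ ω, ‖H ω‖ = 1) : ExistsAdmissiblePairArbitrage F P X :=
  ⟨σ, τ, H, h.isStoppingTime_left, h.isStoppingTime_right, h.nonneg, h.le, ⟨K, hτ⟩,
    ⟨h.measurableAtTime, ae_of_all _ hH⟩, h.wealth_nonneg, h.gain_nonneg, h.gain_pos⟩

theorem exists_normalized [BorelSpace E] (h : IsAdmissiblePairArbitrage F P X σ τ H) :
    ∃ (τ' : Ω → ℝ) (H' : Ω → E), IsAdmissiblePairArbitrage F P X σ τ' H' ∧ ∀ ω, ‖H' ω‖ = 1 := by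
  classical
  obtain ⟨ω₀, hω₀⟩ := nonempty_of_measure_ne_zero h.gain_pos.ne'
  have hH₀ : H ω₀ ≠ 0 := fun h0 => by simp [h0] at hω₀
  set e : E := ‖H ω₀‖⁻¹ • H ω₀
  set g : E → E := fun v => if v = 0 then e else ‖v‖⁻¹ • v
  have hg : Measurable g :=
    Measurable.ite (measurableSet_singleton 0) measurable_const
      (measurable_norm.inv.smul measurable_id)
  have hg_norm : ∀ v, ‖g v‖ = 1 := fun v => by
    dsimp only [g]
    split_ifs with hv
    exacts [norm_smul_inv_norm hH₀, norm_smul_inv_norm hv]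
  have hg_ne : ∀ ω, H ω ≠ 0 → g (H ω) = ‖H ω‖⁻¹ • H ω := fun ω hω => if_neg hω
  set S : Set Ω := {ω | H ω = 0}
  have hτ'_eq : ∀ ω, H ω ≠ 0 → S.piecewise σ τ ω = τ ω := fun ω hω =>
    Set.piecewise_eq_of_notMem _ _ _ hω
  refine ⟨S.piecewise σ τ, g ∘ H, ⟨h.isStoppingTime_left, ?_, h.nonneg, ?_,
    h.measurableAtTime.comp hg, ?_, ?_⟩, fun ω => hg_norm _⟩
  · refine isStoppingTime_piecewise_of_le h.isStoppingTime_right h.le fun t => ?_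
    exact measurableAtTime_coe_iff.mp h.measurableAtTime {0} (measurableSet_singleton 0) t
  · intro ω
    by_cases hω : H ω = 0
    · simp [S, hω]
    · rw [hτ'_eq ω hω]; exact h.le ω
  · filter_upwards [h.wealth_nonneg] with ω hω t ht
    by_cases hH0 : H ω = 0
    · rw [pairWealth_of_eq (Set.piecewise_eq_of_mem S σ τ hH0).symm]
    · have hpw : pairWealth X (g ∘ H) σ (S.piecewise σ τ) t ω =
          ‖H ω‖⁻¹ * pairWealth X H σ τ t ω := by
        simp only [pairWealth, Function.comp, hg_ne ω hH0, hτ'_eq ω hH0, real_inner_smul_left]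
      rw [hpw]
      exact mul_nonneg (inv_nonneg.mpr (norm_nonneg _)) (hω t ht)
  · refine h.gain_pos.trans_le (measure_mono fun ω hω => ?_)
    have hH0 : H ω ≠ 0 := fun h0 => by simp [h0] at hω
    simp only [mem_ofPred_eq, Function.comp, hg_ne ω hH0, hτ'_eq ω hH0, real_inner_smul_left]
    exact mul_pos (inv_pos.mpr (norm_pos_iff.mpr hH0)) hω

theorem truncate (h : IsAdmissiblePairArbitrage F P X σ τ H) (e : E) {m : ℝ} (hm : 0 ≤ m)
    (hpos : 0 < P ({ω | 0 < ⟪H ω, X (τ ω) ω - X (σ ω) ω⟫} ∩ {ω | τ ω ≤ m})) :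
    IsAdmissiblePairArbitrage F P X (fun ω => min (σ ω) m) (fun ω => min (τ ω) m)
      (fun ω => if σ ω ≤ m then H ω else e) := by
  refine ⟨?_, ?_, fun ω => le_min (h.nonneg ω) hm, fun ω => min_le_min_right m (h.le ω),
    h.measurableAtTime.ite_le_min h.isStoppingTime_left m e, ?_, ?_⟩
  · simpa only [WithTop.coe_min] using h.isStoppingTime_left.min (isStoppingTime_const F m)
  · simpa only [WithTop.coe_min] using h.isStoppingTime_right.min (isStoppingTime_const F m)
  · filter_upwards [h.wealth_nonneg] with ω hω t ht
    by_cases hσm : σ ω ≤ m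
    · simp only [pairWealth, hσm, if_true]
      exact (pairWealth_min_const m).trans_ge (hω _ (le_min ht hm))
    · have hmσ : m ≤ σ ω := (not_le.mp hσm).le
      rw [pairWealth_of_eq (by simp only [min_eq_right hmσ, min_eq_right (hmσ.trans (h.le ω))])]
  · refine hpos.trans_le (measure_mono fun ω ⟨hω, (hτm : τ ω ≤ m)⟩ => ?_)
    have hσm : σ ω ≤ m := (h.le ω).trans hτm
    simpa [hσm, min_eq_left hτm] using hω

theorem exists_bounded (h : IsAdmissiblePairArbitrage F P X σ τ H) (hH : ∀ ω, ‖H ω‖ = 1) :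
    ∃ (σ' τ' : Ω → ℝ) (H' : Ω → E) (K : ℝ), IsAdmissiblePairArbitrage F P X σ' τ' H' ∧
      (∀ ω, τ' ω ≤ K) ∧ ∀ ω, ‖H' ω‖ = 1 := by
  obtain ⟨m, hm⟩ := exists_nat_measure_inter_le_pos h.gain_pos τ
  obtain ⟨ω₀, -⟩ := nonempty_of_measure_ne_zero hm.ne'
  refine ⟨_, _, _, m, h.truncate (H ω₀) m.cast_nonneg hm, fun ω => min_le_right _ _,
    fun ω => ?_⟩
  split_ifs <;> exact hH _

end IsAdmissiblePairArbitrage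

/-- `V_{τ_j}(Φ;0)`, the wealth accumulated by the first `j` trades. -/
noncomputable def partialWealthEnd {F : Filtration ℝ mΩ} (X : ℝ → Ω → E) (Φ : SimpleStrategy F E)
    (j : ℕ) (ω : Ω) : ℝ :=
  ∑ i ∈ Finset.range j, ⟪Φ.φ i ω, X (Φ.τ (i + 1) ω) ω - X (Φ.τ i ω) ω⟫

variable {F : Filtration ℝ mΩ} {P : Measure Ω} {X : ℝ → Ω → E} {Φ : SimpleStrategy F E}

theorem wealth_eq_partialWealthEnd_add {j : ℕ} (hj : j < Φ.n) {s : ℝ} {ω : Ω}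
    (hs₁ : Φ.τ j ω ≤ s) (hs₂ : s ≤ Φ.τ (j + 1) ω) :
    wealth X Φ s ω = partialWealthEnd X Φ j ω + ⟪Φ.φ j ω, X s ω - X (Φ.τ j ω) ω⟫ := by
  rw [wealth, ← Finset.sum_range_add_sum_Ico _ (Nat.succ_le_of_lt hj), Finset.sum_range_succ,
    min_eq_left hs₂, min_eq_right hs₁]
  have hlater : ∑ i ∈ Finset.Ico (j + 1) Φ.n,
      ⟪Φ.φ i ω, X (min s (Φ.τ (i + 1) ω)) ω - X (min s (Φ.τ i ω)) ω⟫ = 0 := by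
    refine Finset.sum_eq_zero fun i hi => ?_
    obtain ⟨hji, hin⟩ := Finset.mem_Ico.mp hi
    have hsi : s ≤ Φ.τ i ω := hs₂.trans (Φ.τ_le_τ_s2 hji hin.le ω)
    rw [min_eq_left hsi, min_eq_left (hsi.trans (Φ.τ_mono i hin ω)), sub_self, inner_zero_right]
  have hearlier : ∑ i ∈ Finset.range j,
      ⟪Φ.φ i ω, X (min s (Φ.τ (i + 1) ω)) ω - X (min s (Φ.τ i ω)) ω⟫ =
        partialWealthEnd X Φ j ω := by
    refine Finset.sum_congr rfl fun i hi => ?_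
    have hi : i + 1 ≤ j := Finset.mem_range.mp hi
    have hi₁ : Φ.τ (i + 1) ω ≤ s := (Φ.τ_le_τ_s2 hi hj.le ω).trans hs₁
    rw [min_eq_right hi₁, min_eq_right ((Φ.τ_le_τ_s2 i.le_succ (hi.trans hj.le) ω).trans hi₁)]
  rw [hlater, hearlier, add_zero]

theorem IsArbitrage.exists_null_pos_partialWealthEnd (hΦ : IsArbitrage P X Φ) :
    ∃ j < Φ.n, P {ω | 0 < partialWealthEnd X Φ j ω} = 0 ∧
      0 < P {ω | 0 < partialWealthEnd X Φ (j + 1) ω} := by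
  obtain ⟨j, hj, hj₁⟩ := Nat.exists_not_and_succ_of_not_zero_of_exists
    (p := fun j => j ≤ Φ.n ∧ 0 < P {ω | 0 < partialWealthEnd X Φ j ω})
    (by simp [partialWealthEnd]) ⟨Φ.n, le_rfl, hΦ.2⟩
  refine ⟨j, hj₁.1, nonpos_iff_eq_zero.mp (not_lt.mp fun h => hj ⟨j.le_succ.trans hj₁.1, h⟩), hj₁.2⟩

theorem IsArbitrage.exists_isAdmissiblePairArbitrage (hΦ : IsArbitrage P X Φ)
    (hadm : IsAdmissible P X Φ 0) :
    ∃ j, IsAdmissiblePairArbitrage F P X (Φ.τ j) (Φ.τ (j + 1)) (Φ.φ j) := by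
  obtain ⟨j, hj, hnull, hpos⟩ := hΦ.exists_null_pos_partialWealthEnd
  have hwealth : ∀ ω, wealth X Φ (Φ.τ j ω) ω = partialWealthEnd X Φ j ω := fun ω => by
    rw [wealth_eq_partialWealthEnd_add hj le_rfl (Φ.τ_mono j hj ω), sub_self, inner_zero_right,
      add_zero]
  have hzero : ∀ᵐ ω ∂P, partialWealthEnd X Φ j ω = 0 := by
    filter_upwards [hadm, measure_eq_zero_iff_ae_notMem.mp hnull] with ω hω hnpos
    rw [← hwealth] at hnpos ⊢
    exact le_antisymm (not_lt.mp hnpos) (by simpa using hω _ (Φ.τ_nonneg_s2 hj.le ω))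
  refine ⟨j, Φ.τ_stopping j hj.le, Φ.τ_stopping (j + 1) hj, Φ.τ_nonneg_s2 hj.le, Φ.τ_mono j hj,
    Φ.φ_meas j hj, ?_, ?_⟩
  · filter_upwards [hadm, hzero] with ω hω h0 t ht
    rcases le_total t (Φ.τ j ω) with htj | hjt
    · exact (pairWealth_of_le_left htj (Φ.τ_mono j hj ω)).ge
    · have hV := hω _ (le_min ht ((Φ.τ_nonneg_s2 hj.le ω).trans (Φ.τ_mono j hj ω)))
      rw [wealth_eq_partialWealthEnd_add hj (le_min hjt (Φ.τ_mono j hj ω)) (min_le_right _ _),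
        h0, zero_add, neg_zero] at hV
      rwa [pairWealth, min_eq_right hjt]
  · refine hpos.trans_le ((measure_sdiff_null hnull).symm.trans_le (measure_mono ?_))
    rintro ω ⟨hω₁, hω₀⟩
    simp only [mem_ofPred_eq, partialWealthEnd, Finset.sum_range_succ, not_lt] at hω₁ hω₀ ⊢
    linarith

theorem statement2_general {Ω : Type*} {mΩ : MeasurableSpace Ω} (P : Measure Ω)
    (F : Filtration ℝ mΩ) (D : ℕ)
    (X : ℝ → Ω → EuclideanSpace ℝ (Fin D))
    (hArb : ∃ Φ : SimpleStrategy F (EuclideanSpace ℝ (Fin D)),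
      IsArbitrage P X Φ ∧ IsAdmissible P X Φ 0) :
    ExistsAdmissiblePairArbitrage F P X := by
  obtain ⟨Φ, hΦ, hadm⟩ := hArb
  obtain ⟨j, hj⟩ := hΦ.exists_isAdmissiblePairArbitrage hadm
  obtain ⟨τ, H, hpair, hH⟩ := hj.exists_normalized
  obtain ⟨σ', τ', H', K, hbdd, hτ', hH'⟩ := hpair.exists_bounded hH
  exact hbdd.existsAdmissiblePairArbitrage hτ' hH'

/-- (Proposition: reduction of 0-admissible simple arbitrage to the form
`H 1_{(σ,τ]}` with bounded stopping times `σ ≤ τ` and an `𝓕_σ`-measurable direction `H`). -/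
theorem statement2 {Ω : Type*} {mΩ : MeasurableSpace Ω} (P : Measure Ω) [IsProbabilityMeasure P]
    (F : Filtration ℝ mΩ) (hUC : UsualConditions F P) (D : ℕ)
    (X : ℝ → Ω → EuclideanSpace ℝ (Fin D))
    (hAdapted : AdaptedProc F X) (hRC : RightContinuousPaths X)
    (hArb : ∃ Φ : SimpleStrategy F (EuclideanSpace ℝ (Fin D)),
      IsArbitrage P X Φ ∧ IsAdmissible P X Φ 0) :
    ExistsAdmissiblePairArbitrage F P X :=
  statement2_general P F D X hArb

end SimpleArbitrage
end
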